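/- arXiv:2005.03105 — 7 statements merged into one kernel-verified Lean document; each statement's English description precedes it below -/
import Mathlib

section
/- Let n ≥ 5 and let C_1, …, C_{n−1} ∈ GL_r(ℂ) be an irreducible representation of B_n of dimension r ≥ n+1. Suppose there is a nonzero vector v ∈ ℂ^r such that the line span{v} is invariant under C_1, …, C_{n−3} and under C_{n−1} (i.e., C_i v ∈ span{v} for i ∈ {1, …, n−3} ∪ {n−1}). Then there exists a nonzero complex number y such that rank(C_1 − y·I) ≤ r − n + 2. -/
/-!
The braid relation forces `T 1, …, T (n - 3)` to have one common eigenvalue `μ ≠ 0` on `v`;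
suppose `dim ker (T 1 - μ) ≤ n - 3`. Let `U k` be the smallest subspace containing `v` and
stable under `T k, …, T (n - 1)`. Since `T i` acts on `U k` as `μ` whenever `i + 2 ≤ k`,
irreducibility makes the chain `U 2 ⊋ U 3 ⊋ ⋯ ⊋ U (n - 1) ∋ v` strict, and
`U 3 ⊆ ker (T 1 - μ)` forces `dim U k = n - k`, with `U k = U (k + 1) + K z_k` for
`z_j = T j ⋯ T (n - 2) v`.

The subspace `X = U 3 + K z_2 + K z_1` has dimension at most `n - 1 < dim V`, yet it is stable
under every generator, contradicting irreducibility. The eigenspaces `ker (T i - μ)` are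
conjugate under `T i T (i + 1)`, so all have dimension `n - 3`. The vectors `z_1, …, z_{n-3}`
lie in `ker (T (n - 2) - μ)`, and counting dimensions in
`X ⊆ span (z_1, …, z_{n-3}) + U (n - 2)` shows that they span it. Hence
`ker (T (n - 2) - μ) ⊆ X`, and then `ker (T (n - 1) - μ) ⊆ X`, which controls the two
remaining vectors `T 1 z_1` and `T 2 z_2`. Along the way, `z_1 ∉ U 3 + K z_2`, since otherwise
`U 3 + K z_2` would already be a proper invariant subspace.
-/

open Module Module.End Submodule

section LinearAlgebra

variable {K V : Type*} [Field K] [AddCommGroup V] [Module K V]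

theorem eigenvalue_ne_zero_of_isUnit {f : Module.End K V} (hf : IsUnit f) {v : V} (hv : v ≠ 0)
    {a : K} (h : f v = a • v) : a ≠ 0 := by
  rintro rfl
  exact hv (((Module.End.isUnit_iff f).1 hf).1 (by rw [h, zero_smul, map_zero]))

theorem map_eigenspace_of_mul_eq {a b g : Module.End K V} (hg : IsUnit g) (h : g * a = b * g)
    (μ : K) : (eigenspace a μ).map g = eigenspace b μ := by
  obtain ⟨g, rfl⟩ := hg
  have ha : a = ↑g⁻¹ * b * ↑g := by
    rw [mul_assoc, ← h, ← mul_assoc, Units.inv_mul, one_mul]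
  ext y
  simp only [mem_map, mem_eigenspace_iff]
  constructor
  · rintro ⟨x, hx, rfl⟩
    rw [← mul_apply, ← h, mul_apply, hx, map_smul]
  · intro hy
    have hgg (w : V) : (↑g : Module.End K V) ((↑g⁻¹ : Module.End K V) w) = w := by
      rw [← mul_apply, Units.mul_inv, one_apply]
    refine ⟨(↑g⁻¹ : Module.End K V) y, ?_, hgg y⟩
    rw [ha, mul_apply, mul_apply, hgg, hy, map_smul]

theorem mem_invtSubmodule_of_le_eigenspace {f : Module.End K V} {p : Submodule K V} {μ : K}
    (h : p ≤ eigenspace f μ) : p ∈ f.invtSubmodule :=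
  (mem_invtSubmodule_iff_forall_mem_of_mem _).2 fun x hx => by
    rw [mem_eigenspace_iff.1 (h hx)]
    exact p.smul_mem μ hx

variable [FiniteDimensional K V]

theorem mem_of_apply_mem_of_injective {f : Module.End K V} (hf : Function.Injective f)
    {p : Submodule K V} (hp : p ∈ f.invtSubmodule) {x : V} (hx : f x ∈ p) : x ∈ p := by
  have hmap : p.map f = p := eq_of_le_of_finrank_le (map_le_iff_le_comap.2 hp)
    (LinearEquiv.finrank_eq (equivMapOfInjective f hf p)).le
  obtain ⟨y, hy, hxy⟩ := mem_map.1 (hmap.symm ▸ hx)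
  exact hf hxy ▸ hy

theorem eq_sup_span_singleton_of_finrank_le {p q : Submodule K V} {x : V} (hpq : p ≤ q)
    (hxq : x ∈ q) (hxp : x ∉ p) (hq : finrank K q ≤ finrank K p + 1) : q = p ⊔ K ∙ x :=
  (eq_of_le_of_finrank_le (sup_le hpq ((span_singleton_le_iff_mem _ _).2 hxq))
    (by rwa [finrank_sup_span_singleton hxp])).symm

theorem finrank_sup_span_singleton_le (p : Submodule K V) (x : V) :
    finrank K (p ⊔ K ∙ x : Submodule K V) ≤ finrank K p + 1 := by
  by_cases hx : x ∈ p
  · rw [sup_eq_left.2 ((span_singleton_le_iff_mem _ _).2 hx)]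
    omega
  · rw [finrank_sup_span_singleton hx]

end LinearAlgebra

structure IsBraidRep {M : Type*} [Monoid M] (n : ℕ) (T : ℕ → M) : Prop where
  isUnit : ∀ i, 1 ≤ i → i ≤ n - 1 → IsUnit (T i)
  commute : ∀ i j, 1 ≤ i → i + 2 ≤ j → j ≤ n - 1 → Commute (T i) (T j)
  braid : ∀ i, 1 ≤ i → i + 2 ≤ n → T i * T (i + 1) * T i = T (i + 1) * T i * T (i + 1)

section Monoid

variable {M : Type*} [Monoid M] {n : ℕ} {T : ℕ → M}

def braidChain (T : ℕ → M) (j m : ℕ) : M := ((List.range' j m).map T).prod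

theorem braidChain_succ (T : ℕ → M) (j m : ℕ) :
    braidChain T j (m + 1) = T j * braidChain T (j + 1) m := by
  simp [braidChain, List.range'_succ]

theorem IsBraidRep.commute_braidChain (hT : IsBraidRep n T) {i j m : ℕ} (hi : 1 ≤ i)
    (hij : i + 2 ≤ j) (hjm : j + m ≤ n) : Commute (T i) (braidChain T j m) := by
  refine Commute.list_prod_right _ _ fun x hx => ?_
  obtain ⟨k, hk, rfl⟩ := List.mem_map.1 hx
  rw [List.mem_range'_1] at hk
  exact hT.commute i k hi (by omega) (by omega)

theorem IsBraidRep.mul_braidChain (hT : IsBraidRep n T) {j m l : ℕ} (hj : 1 ≤ j)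
    (hlm : l + 2 ≤ m) (hjm : j + m ≤ n) :
    T (j + 1 + l) * braidChain T j m = braidChain T j m * T (j + l) := by
  induction m generalizing j l with
  | zero => omega
  | succ m ih =>
    rw [braidChain_succ]
    rcases l with _ | l
    · obtain ⟨m, rfl⟩ : ∃ m', m = m' + 1 := ⟨m - 1, by omega⟩
      rw [braidChain_succ, add_zero]
      calc T (j + 1) * (T j * (T (j + 1) * braidChain T (j + 1 + 1) m))
          = T j * T (j + 1) * T j * braidChain T (j + 2) m := by
            simp only [← mul_assoc, hT.braid j hj (by omega)]
        _ = T j * (T (j + 1) * braidChain T (j + 1 + 1) m) * T j := by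
            rw [mul_assoc _ (T j), (hT.commute_braidChain hj le_rfl (by omega)).eq]
            simp only [mul_assoc]
    · rw [← mul_assoc, ← (hT.commute j (j + 1 + (l + 1)) hj (by omega) (by omega)).eq,
        mul_assoc, show j + 1 + (l + 1) = j + 1 + 1 + l by omega,
        ih (by omega) (by omega) (by omega), ← mul_assoc, show j + (l + 1) = j + 1 + l by omega]

end Monoid

section BraidRep

variable {K V : Type*} [Field K] [AddCommGroup V] [Module K V] {n : ℕ}
  {T : ℕ → Module.End K V}

theorem IsBraidRep.injective (hT : IsBraidRep n T) {i : ℕ} (hi : 1 ≤ i) (hin : i ≤ n - 1) :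
    Function.Injective (T i) :=
  ((Module.End.isUnit_iff _).1 (hT.isUnit i hi hin)).1

theorem IsBraidRep.eigenvalue_eq (hT : IsBraidRep n T) {i : ℕ} (hi : 1 ≤ i) (hin : i + 2 ≤ n)
    {v : V} (hv : v ≠ 0) {a b : K} (ha : T i v = a • v) (hb : T (i + 1) v = b • v) :
    a = b := by
  have hbraid := congr($(hT.braid i hi hin) v)
  simp only [mul_apply, ha, hb, map_smul, smul_smul] at hbraid
  have ha0 := eigenvalue_ne_zero_of_isUnit (hT.isUnit i hi (by omega)) hv ha
  have hb0 := eigenvalue_ne_zero_of_isUnit (hT.isUnit (i + 1) (by omega) (by omega)) hv hb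
  exact mul_left_cancel₀ (mul_ne_zero ha0 hb0)
    (by linear_combination smul_left_injective K hv hbraid)

theorem IsBraidRep.exists_eigenvalue (hT : IsBraidRep n T) (hn : 4 ≤ n) {v : V} (hv : v ≠ 0)
    (hline : ∀ i, 1 ≤ i → i ≤ n - 3 → T i v ∈ K ∙ v) :
    ∃ μ : K, μ ≠ 0 ∧ ∀ i, 1 ≤ i → i ≤ n - 3 → T i v = μ • v := by
  obtain ⟨μ, hμ⟩ := mem_span_singleton.1 (hline 1 le_rfl (by omega))
  refine ⟨μ, eigenvalue_ne_zero_of_isUnit (hT.isUnit 1 le_rfl (by omega)) hv hμ.symm,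
    fun i hi hin => ?_⟩
  induction i, hi using Nat.le_induction with
  | base => exact hμ.symm
  | succ i hi ih =>
    obtain ⟨b, hb⟩ := mem_span_singleton.1 (hline (i + 1) (by omega) hin)
    rw [← hb, ← hT.eigenvalue_eq hi (by omega) hv (ih (by omega)) hb.symm]

theorem IsBraidRep.map_eigenspace (hT : IsBraidRep n T) {i : ℕ} (hi : 1 ≤ i) (hin : i + 2 ≤ n)
    (μ : K) : (eigenspace (T i) μ).map (T i * T (i + 1)) = eigenspace (T (i + 1)) μ :=
  map_eigenspace_of_mul_eq
    ((hT.isUnit i hi (by omega)).mul (hT.isUnit (i + 1) (by omega) (by omega)))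
    (by rw [hT.braid i hi hin, mul_assoc]) μ

theorem IsBraidRep.finrank_eigenspace [FiniteDimensional K V] (hT : IsBraidRep n T) {i : ℕ}
    (hi : 1 ≤ i) (hin : i ≤ n - 1) (μ : K) :
    finrank K (eigenspace (T i) μ) = finrank K (eigenspace (T 1) μ) := by
  induction i, hi using Nat.le_induction with
  | base => rfl
  | succ i hi ih =>
    obtain ⟨g, hg⟩ := (hT.isUnit i hi (by omega)).mul (hT.isUnit (i + 1) (by omega) (by omega))
    rw [← hT.map_eigenspace hi (by omega), ← hg, ← ih (by omega)]
    exact LinearEquiv.finrank_map_eq (LinearMap.GeneralLinearGroup.toLinearEquiv g) _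

end BraidRep

section OrbitSpan

variable {K V : Type*} [Field K] [AddCommGroup V] [Module K V] {n k : ℕ}
  {T : ℕ → Module.End K V} {v : V}

def orbitSpan (n : ℕ) (T : ℕ → Module.End K V) (v : V) (k : ℕ) : Submodule K V :=
  sInf {p | v ∈ p ∧ ∀ i, k ≤ i → i ≤ n - 1 → p ∈ (T i).invtSubmodule}

theorem mem_orbitSpan_self : v ∈ orbitSpan n T v k :=
  mem_sInf.2 fun _ hp => hp.1

theorem orbitSpan_le {p : Submodule K V} (hv : v ∈ p)
    (hp : ∀ i, k ≤ i → i ≤ n - 1 → p ∈ (T i).invtSubmodule) : orbitSpan n T v k ≤ p :=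
  sInf_le ⟨hv, hp⟩

theorem orbitSpan_mem_invtSubmodule {i : ℕ} (hki : k ≤ i) (hin : i ≤ n - 1) :
    orbitSpan n T v k ∈ (T i).invtSubmodule :=
  fun _ hx => mem_sInf.2 fun p hp => hp.2 i hki hin (mem_sInf.1 hx p hp)

theorem orbitSpan_antitone : Antitone (orbitSpan n T v) := fun _ _ hkl =>
  orbitSpan_le mem_orbitSpan_self fun _ hli hin => orbitSpan_mem_invtSubmodule (hkl.trans hli) hin

theorem orbitSpan_le_span_singleton (h : T (n - 1) v ∈ K ∙ v) :
    orbitSpan n T v (n - 1) ≤ K ∙ v :=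
  orbitSpan_le (mem_span_singleton_self v) fun i hi hin x hx => by
    obtain rfl : i = n - 1 := by omega
    obtain ⟨a, rfl⟩ := mem_span_singleton.1 hx
    simpa using smul_mem _ a h

theorem finrank_orbitSpan_add [FiniteDimensional K V] (hv : v ≠ 0)
    (hlt : ∀ k, 3 ≤ k → k + 2 ≤ n → orbitSpan n T v (k + 1) < orbitSpan n T v k)
    (h3 : finrank K (orbitSpan n T v 3) + 3 ≤ n) (hk : 3 ≤ k) (hkn : k + 1 ≤ n) :
    finrank K (orbitSpan n T v k) + k = n := by
  have hlast : 1 ≤ finrank K (orbitSpan n T v (n - 1)) := by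
    rw [← finrank_span_singleton hv (K := K)]
    exact finrank_mono ((span_singleton_le_iff_mem _ _).2 mem_orbitSpan_self)
  have hstep (l : ℕ) (hl : 3 ≤ l) (hln : l + 2 ≤ n) :=
    finrank_lt_finrank_of_lt (hlt l hl hln)
  have hup :
      finrank K (orbitSpan n T v (n - 1)) + (n - 1) ≤ finrank K (orbitSpan n T v k) + k := by
    induction (show k ≤ n - 1 by omega) using Nat.decreasingInduction with
    | self => rfl
    | of_succ l hl ih =>
      have := hstep l (by omega) (by omega)
      have := ih (by omega) (by omega)
      omega
  have hdown : finrank K (orbitSpan n T v k) + k ≤ finrank K (orbitSpan n T v 3) + 3 := by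
    induction k, hk using Nat.le_induction with
    | base => rfl
    | succ l hl ih =>
      have := hstep l hl (by omega)
      have := ih (by omega)
      omega
  omega

/-- `T j * T (j + 1) * ⋯ * T (n - 2)` applied to `v`. -/
def braidVec (n : ℕ) (T : ℕ → Module.End K V) (v : V) (j : ℕ) : V :=
  braidChain T j (n - 1 - j) v

theorem braidVec_self : braidVec n T v (n - 1) = v := by
  simp [braidVec, braidChain]

theorem braidVec_eq_apply {j : ℕ} (hj : j + 2 ≤ n) :
    braidVec n T v j = T j (braidVec n T v (j + 1)) := by
  rw [braidVec, show n - 1 - j = n - 1 - (j + 1) + 1 by omega, braidChain_succ, mul_apply]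
  rfl

theorem braidVec_mem_orbitSpan {j : ℕ} (hkj : k ≤ j) (hjn : j ≤ n - 1) :
    braidVec n T v j ∈ orbitSpan n T v k := by
  induction hjn using Nat.decreasingInduction with
  | self => rw [braidVec_self]; exact mem_orbitSpan_self
  | of_succ j hj ih =>
    rw [braidVec_eq_apply (by omega)]
    exact orbitSpan_mem_invtSubmodule hkj (by omega) (ih (by omega))

theorem IsBraidRep.apply_last_braidVec (hT : IsBraidRep n T) {j : ℕ} (hj : 1 ≤ j)
    (hjn : j + 3 ≤ n) :
    T (n - 1) (braidVec n T v j) = T j (T (n - 1) (braidVec n T v (j + 1))) := by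
  rw [braidVec_eq_apply (by omega), ← mul_apply, ← mul_apply,
    (hT.commute j (n - 1) hj (by omega) le_rfl).eq]

theorem braidVec_notMem_orbitSpan_of_lt
    (hQ : orbitSpan n T v (k + 1) ≤
      (orbitSpan n T v (k + 1) ⊔ K ∙ braidVec n T v k).comap (T k))
    (hlt : orbitSpan n T v (k + 1) < orbitSpan n T v k) :
    braidVec n T v k ∉ orbitSpan n T v (k + 1) := fun hz =>
  hlt.not_ge <| orbitSpan_le mem_orbitSpan_self fun i hki hin => by
    rcases hki.eq_or_lt with rfl | hki
    · rwa [sup_eq_left.2 ((span_singleton_le_iff_mem _ _).2 hz)] at hQ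
    · exact orbitSpan_mem_invtSubmodule hki hin

theorem orbitSpan_eq_sup_braidVec [FiniteDimensional K V]
    (hdim : ∀ k, 3 ≤ k → k + 1 ≤ n → finrank K (orbitSpan n T v k) + k = n)
    (hk : 3 ≤ k) (hkn : k + 2 ≤ n) (hz : braidVec n T v k ∉ orbitSpan n T v (k + 1)) :
    orbitSpan n T v k = orbitSpan n T v (k + 1) ⊔ K ∙ braidVec n T v k :=
  eq_sup_span_singleton_of_finrank_le (orbitSpan_antitone k.le_succ)
    (braidVec_mem_orbitSpan le_rfl (by omega)) hz
    (by have := hdim k hk (by omega); have := hdim (k + 1) (by omega) (by omega); omega)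

theorem orbitSpan_le_span_braidVec_sup
    (hP : ∀ k, 3 ≤ k → k + 2 ≤ n →
      orbitSpan n T v k = orbitSpan n T v (k + 1) ⊔ K ∙ braidVec n T v k)
    (hk : 3 ≤ k) (hkn : k + 2 ≤ n) :
    orbitSpan n T v k ≤
      span K (braidVec n T v '' Set.Icc 1 (n - 3)) ⊔ orbitSpan n T v (n - 2) := by
  induction (show k ≤ n - 2 by omega) using Nat.decreasingInduction with
  | self => exact le_sup_right
  | of_succ k hk' ih =>
    rw [hP k hk (by omega)]
    exact sup_le (ih (by omega) (by omega)) ((span_singleton_le_iff_mem _ _).2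
      (mem_sup_left (subset_span ⟨k, ⟨by omega, by omega⟩, rfl⟩)))

end OrbitSpan

section Irreducible

variable {K V : Type*} [Field K] [AddCommGroup V] [Module K V]

def IsIrreducibleRep (n : ℕ) (T : ℕ → Module.End K V) : Prop :=
  ∀ p : Submodule K V,
    (∀ i, 1 ≤ i → i ≤ n - 1 → p ∈ (T i).invtSubmodule) → p = ⊥ ∨ p = ⊤

theorem IsIrreducibleRep.eq_top {n : ℕ} {T : ℕ → Module.End K V} (h : IsIrreducibleRep n T)
    {p : Submodule K V} {v : V} (hv : v ≠ 0) (hvp : v ∈ p)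
    (hp : ∀ i, 1 ≤ i → i ≤ n - 1 → p ∈ (T i).invtSubmodule) : p = ⊤ :=
  (h p hp).resolve_left fun hbot => hv (by simpa [hbot] using hvp)

structure InvariantLine (n : ℕ) (T : ℕ → Module.End K V) (v : V) (μ : K) : Prop where
  braid : IsBraidRep n T
  five_le : 5 ≤ n
  ne_zero : v ≠ 0
  apply_eq : ∀ i, 1 ≤ i → i ≤ n - 3 → T i v = μ • v
  apply_last_mem : T (n - 1) v ∈ K ∙ v

namespace InvariantLine

variable {n : ℕ} {T : ℕ → Module.End K V} {v : V} {μ : K}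

theorem eigenvalue_ne_zero (h : InvariantLine n T v μ) : μ ≠ 0 :=
  eigenvalue_ne_zero_of_isUnit (h.braid.isUnit 1 le_rfl (by have := h.five_le; omega)) h.ne_zero
    (h.apply_eq 1 le_rfl (by have := h.five_le; omega))

theorem orbitSpan_le_eigenspace (h : InvariantLine n T v μ) {i k : ℕ} (hi : 1 ≤ i)
    (hik : i + 2 ≤ k) (hin : i + 3 ≤ n) : orbitSpan n T v k ≤ eigenspace (T i) μ :=
  orbitSpan_le (mem_eigenspace_iff.2 (h.apply_eq i hi (by omega))) fun j hkj hjn =>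
    mapsTo_genEigenspace_of_comm (h.braid.commute i j hi (by omega) hjn) μ 1

theorem apply_braidVec (h : InvariantLine n T v μ) {i j : ℕ} (hj : 1 ≤ j) (hji : j < i)
    (hin : i + 2 ≤ n) : T i (braidVec n T v j) = μ • braidVec n T v j := by
  obtain ⟨l, rfl⟩ : ∃ l, i = j + 1 + l := ⟨i - j - 1, by omega⟩
  rw [braidVec, ← mul_apply, h.braid.mul_braidChain hj (by omega) (by omega), mul_apply,
    h.apply_eq (j + l) (by omega) (by omega), map_smul]

theorem orbitSpan_succ_lt (h : InvariantLine n T v μ) (hirr : IsIrreducibleRep n T)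
    (h1 : eigenspace (T 1) μ ≠ ⊤) {k : ℕ} (hk : 2 ≤ k) (hkn : k + 2 ≤ n) :
    orbitSpan n T v (k + 1) < orbitSpan n T v k := by
  refine lt_of_le_of_ne (orbitSpan_antitone k.le_succ) fun heq => h1 (eq_top_iff.2 ?_)
  rw [← hirr.eq_top h.ne_zero (mem_orbitSpan_self (k := k + 1)) fun i hi hin => ?_]
  · exact h.orbitSpan_le_eigenspace le_rfl (by omega) (by omega)
  rcases lt_trichotomy i k with hik | rfl | hki
  · exact mem_invtSubmodule_of_le_eigenspace (h.orbitSpan_le_eigenspace hi (by omega) (by omega))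
  · exact heq ▸ orbitSpan_mem_invtSubmodule le_rfl hin
  · exact orbitSpan_mem_invtSubmodule hki hin

theorem orbitSpan_le_comap_sup (h : InvariantLine n T v μ) {k : ℕ} (hk : 2 ≤ k)
    (hkn : k + 2 ≤ n) (hnext : k + 3 ≤ n →
      orbitSpan n T v (k + 1) ≤ orbitSpan n T v (k + 2) ⊔ K ∙ braidVec n T v (k + 1)) :
    orbitSpan n T v (k + 1) ≤
      (orbitSpan n T v (k + 1) ⊔ K ∙ braidVec n T v k).comap (T k) := by
  rcases (show k + 3 ≤ n ∨ k + 2 = n by omega) with hkn | hkn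
  · refine (hnext hkn).trans (sup_le (fun x hx => ?_) ((span_singleton_le_iff_mem _ _).2 ?_))
    · rw [mem_comap, mem_eigenspace_iff.1 (h.orbitSpan_le_eigenspace (by omega) le_rfl hkn hx)]
      exact mem_sup_left (smul_mem _ μ (orbitSpan_antitone k.succ.le_succ hx))
    · rw [mem_comap, ← braidVec_eq_apply (by omega)]
      exact mem_sup_right (mem_span_singleton_self _)
  · have hk1 : k + 1 = n - 1 := by omega
    have hz : braidVec n T v k = T k v := by rw [braidVec_eq_apply (by omega), hk1, braidVec_self]
    rw [hk1]
    refine (orbitSpan_le_span_singleton h.apply_last_mem).trans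
      ((span_singleton_le_iff_mem _ _).2 ?_)
    rw [mem_comap, ← hz]
    exact mem_sup_right (mem_span_singleton_self _)

theorem braidVec_notMem_orbitSpan [FiniteDimensional K V] (h : InvariantLine n T v μ)
    (hlt : ∀ k, 2 ≤ k → k + 2 ≤ n → orbitSpan n T v (k + 1) < orbitSpan n T v k)
    (hdim : ∀ k, 3 ≤ k → k + 1 ≤ n → finrank K (orbitSpan n T v k) + k = n)
    {k : ℕ} (hk : 2 ≤ k) (hkn : k + 2 ≤ n) :
    braidVec n T v k ∉ orbitSpan n T v (k + 1) := by
  induction (show k ≤ n - 2 by omega) using Nat.decreasingInduction with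
  | self =>
    exact braidVec_notMem_orbitSpan_of_lt
      (h.orbitSpan_le_comap_sup hk (by omega) fun _ => by omega) (hlt _ hk (by omega))
  | of_succ k hk' ih =>
    exact braidVec_notMem_orbitSpan_of_lt (h.orbitSpan_le_comap_sup hk (by omega) fun _ =>
      (orbitSpan_eq_sup_braidVec hdim (by omega) (by omega) (ih (by omega) (by omega))).le)
      (hlt k hk hkn)

theorem sup_braidVec_two_mem_invtSubmodule (h : InvariantLine n T v μ)
    (hQ : orbitSpan n T v 3 ≤ (orbitSpan n T v 3 ⊔ K ∙ braidVec n T v 2).comap (T 2))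
    {i : ℕ} (hi : 3 ≤ i) (hin : i ≤ n - 1) :
    orbitSpan n T v 3 ⊔ K ∙ braidVec n T v 2 ∈ (T i).invtSubmodule := by
  rw [mem_invtSubmodule]
  refine sup_le (((mem_invtSubmodule _).1 (orbitSpan_mem_invtSubmodule hi hin)).trans
    (comap_mono le_sup_left)) ((span_singleton_le_iff_mem _ _).2 ?_)
  rw [mem_comap]
  rcases (show i + 2 ≤ n ∨ i = n - 1 by omega) with hin | rfl
  · rw [h.apply_braidVec (by omega) (by omega) hin]
    exact smul_mem _ _ (mem_sup_right (mem_span_singleton_self _))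
  · rw [h.braid.apply_last_braidVec (by omega) (by have := h.five_le; omega)]
    exact hQ (orbitSpan_mem_invtSubmodule hi le_rfl (braidVec_mem_orbitSpan le_rfl (by omega)))

theorem sup_braidVec_two_le_comap (h : InvariantLine n T v μ) :
    orbitSpan n T v 3 ⊔ K ∙ braidVec n T v 2 ≤
      (orbitSpan n T v 3 ⊔ K ∙ braidVec n T v 2 ⊔ K ∙ braidVec n T v 1).comap (T 1) := by
  have := h.five_le
  refine sup_le (fun x hx => ?_) ((span_singleton_le_iff_mem _ _).2 ?_)
  · rw [mem_comap, mem_eigenspace_iff.1 (h.orbitSpan_le_eigenspace le_rfl le_rfl (by omega) hx)]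
    exact smul_mem _ _ (mem_sup_left (mem_sup_left hx))
  · rw [mem_comap, ← braidVec_eq_apply (by omega)]
    exact mem_sup_right (mem_span_singleton_self _)

theorem sup_braidVec_one_mem_invtSubmodule (h : InvariantLine n T v μ)
    (hQ : orbitSpan n T v 3 ≤ (orbitSpan n T v 3 ⊔ K ∙ braidVec n T v 2).comap (T 2))
    {i : ℕ} (hi : 3 ≤ i) (hin : i ≤ n - 1) :
    orbitSpan n T v 3 ⊔ K ∙ braidVec n T v 2 ⊔ K ∙ braidVec n T v 1 ∈
      (T i).invtSubmodule := by
  have hY := h.sup_braidVec_two_mem_invtSubmodule hQ hi hin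
  rw [mem_invtSubmodule] at hY ⊢
  refine sup_le (hY.trans (comap_mono le_sup_left)) ((span_singleton_le_iff_mem _ _).2 ?_)
  rw [mem_comap]
  rcases (show i + 2 ≤ n ∨ i = n - 1 by omega) with hin | rfl
  · rw [h.apply_braidVec le_rfl (by omega) hin]
    exact smul_mem _ _ (mem_sup_right (mem_span_singleton_self _))
  · rw [h.braid.apply_last_braidVec le_rfl (by omega)]
    exact h.sup_braidVec_two_le_comap (hY (mem_sup_right (mem_span_singleton_self _)))

theorem sup_braidVec_two_mem_invtSubmodule_of_mem [FiniteDimensional K V]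
    (h : InvariantLine n T v μ)
    (hQ : orbitSpan n T v 3 ≤ (orbitSpan n T v 3 ⊔ K ∙ braidVec n T v 2).comap (T 2))
    (hz2 : braidVec n T v 2 ∉ orbitSpan n T v 3)
    (hz1 : braidVec n T v 1 ∈ orbitSpan n T v 3 ⊔ K ∙ braidVec n T v 2)
    {i : ℕ} (hi : 1 ≤ i) (hin : i ≤ n - 1) :
    orbitSpan n T v 3 ⊔ K ∙ braidVec n T v 2 ∈ (T i).invtSubmodule := by
  have := h.five_le
  rcases (show i = 1 ∨ i = 2 ∨ 3 ≤ i by omega) with rfl | rfl | hi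
  · have hY := h.sup_braidVec_two_le_comap
    rwa [sup_eq_left.2 ((span_singleton_le_iff_mem _ _).2 hz1)] at hY
  · rw [mem_invtSubmodule]
    refine sup_le hQ ((span_singleton_le_iff_mem _ _).2 ?_)
    obtain ⟨u, hu, w, hw, hsum⟩ := mem_sup.1 hz1
    obtain ⟨c, rfl⟩ := mem_span_singleton.1 hw
    have hc : c ≠ 0 := by
      rintro rfl
      refine hz2 (mem_of_apply_mem_of_injective (h.braid.injective le_rfl (by omega))
        (mem_invtSubmodule_of_le_eigenspace (h.orbitSpan_le_eigenspace le_rfl le_rfl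
          (by omega))) ?_)
      rwa [← braidVec_eq_apply (by omega), ← hsum, zero_smul, add_zero]
    have hc2 : c • T 2 (braidVec n T v 2) = μ • braidVec n T v 1 - T 2 u := by
      rw [← h.apply_braidVec (i := 2) le_rfl (by omega) (by omega), ← hsum, map_add, map_smul,
        add_sub_cancel_left]
    rw [mem_comap, ← smul_mem_iff _ hc, hc2]
    exact sub_mem (smul_mem _ _ hz1) (hQ hu)
  · exact h.sup_braidVec_two_mem_invtSubmodule hQ hi hin

theorem eigenspace_le_sup_braidVec_one [FiniteDimensional K V] (h : InvariantLine n T v μ)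
    (hdim : ∀ k, 3 ≤ k → k + 1 ≤ n → finrank K (orbitSpan n T v k) + k = n)
    (hP : ∀ k, 3 ≤ k → k + 2 ≤ n →
      orbitSpan n T v k = orbitSpan n T v (k + 1) ⊔ K ∙ braidVec n T v k)
    (hz2 : braidVec n T v 2 ∉ orbitSpan n T v 3)
    (hz1 : braidVec n T v 1 ∉ orbitSpan n T v 3 ⊔ K ∙ braidVec n T v 2)
    (hE : finrank K (eigenspace (T 1) μ) + 3 ≤ n) :
    eigenspace (T (n - 2)) μ ≤
      orbitSpan n T v 3 ⊔ K ∙ braidVec n T v 2 ⊔ K ∙ braidVec n T v 1 := by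
  have := h.five_le
  set W := span K (braidVec n T v '' Set.Icc 1 (n - 3))
  have hzW {j : ℕ} (hj : 1 ≤ j) (hjn : j + 3 ≤ n) : braidVec n T v j ∈ W :=
    subset_span ⟨j, ⟨hj, by omega⟩, rfl⟩
  have hWE : W ≤ eigenspace (T (n - 2)) μ := span_le.2 <| by
    rintro _ ⟨j, ⟨hj, hjn⟩, rfl⟩
    exact mem_eigenspace_iff.2 (h.apply_braidVec hj (by omega) (by omega))
  have hWX : W ≤ orbitSpan n T v 3 ⊔ K ∙ braidVec n T v 2 ⊔ K ∙ braidVec n T v 1 :=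
    span_le.2 <| by
    rintro _ ⟨j, ⟨hj, hjn⟩, rfl⟩
    rcases (show j = 1 ∨ j = 2 ∨ 3 ≤ j by omega) with rfl | rfl | hj
    · exact mem_sup_right (mem_span_singleton_self _)
    · exact mem_sup_left (mem_sup_right (mem_span_singleton_self _))
    · exact mem_sup_left (mem_sup_left (braidVec_mem_orbitSpan hj (by omega)))
  have hXW : orbitSpan n T v 3 ⊔ K ∙ braidVec n T v 2 ⊔ K ∙ braidVec n T v 1 ≤
      W ⊔ orbitSpan n T v (n - 2) :=
    sup_le (sup_le (orbitSpan_le_span_braidVec_sup hP le_rfl (by omega))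
      ((span_singleton_le_iff_mem _ _).2 (mem_sup_left (hzW (by omega) (by omega)))))
      ((span_singleton_le_iff_mem _ _).2 (mem_sup_left (hzW le_rfl (by omega))))
  have hX := finrank_mono hXW
  rw [finrank_sup_span_singleton hz1, finrank_sup_span_singleton hz2] at hX
  have := finrank_add_le_finrank_add_finrank W (orbitSpan n T v (n - 2))
  have := hdim 3 le_rfl (by omega)
  have := hdim (n - 2) (by omega) (by omega)
  have := h.braid.finrank_eigenspace (i := n - 2) (by omega) (by omega) μ
  rw [← eq_of_le_of_finrank_le hWE (by omega)]
  exact hWX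

theorem eigenspace_last_le_sup_braidVec_one (h : InvariantLine n T v μ)
    (hQ : orbitSpan n T v 3 ≤ (orbitSpan n T v 3 ⊔ K ∙ braidVec n T v 2).comap (T 2))
    (hE : eigenspace (T (n - 2)) μ ≤
      orbitSpan n T v 3 ⊔ K ∙ braidVec n T v 2 ⊔ K ∙ braidVec n T v 1) :
    eigenspace (T (n - 1)) μ ≤
      orbitSpan n T v 3 ⊔ K ∙ braidVec n T v 2 ⊔ K ∙ braidVec n T v 1 := by
  have := h.five_le
  have hmap := h.braid.map_eigenspace (i := n - 2) (by omega) (by omega) μ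
  rw [show n - 2 + 1 = n - 1 by omega] at hmap
  rw [← hmap]
  rintro _ ⟨x, hx, rfl⟩
  exact h.sup_braidVec_one_mem_invtSubmodule hQ (by omega) (by omega)
    (h.sup_braidVec_one_mem_invtSubmodule hQ (by omega) le_rfl (hE hx))

theorem apply_two_braidVec_two_mem [FiniteDimensional K V] (h : InvariantLine n T v μ)
    (hQ : orbitSpan n T v 3 ≤ (orbitSpan n T v 3 ⊔ K ∙ braidVec n T v 2).comap (T 2))
    (hP3 : orbitSpan n T v 3 = orbitSpan n T v 4 ⊔ K ∙ braidVec n T v 3)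
    (hz3 : braidVec n T v 3 ∉ orbitSpan n T v 4)
    (hE : eigenspace (T (n - 1)) μ ≤
      orbitSpan n T v 3 ⊔ K ∙ braidVec n T v 2 ⊔ K ∙ braidVec n T v 1) :
    T 2 (braidVec n T v 2) ∈
      orbitSpan n T v 3 ⊔ K ∙ braidVec n T v 2 ⊔ K ∙ braidVec n T v 1 := by
  have := h.five_le
  have hz3U : T (n - 1) (braidVec n T v 3) ∈ orbitSpan n T v 4 ⊔ K ∙ braidVec n T v 3 :=
    hP3 ▸ orbitSpan_mem_invtSubmodule (by omega) le_rfl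
      (braidVec_mem_orbitSpan le_rfl (by omega))
  obtain ⟨y, hy, w, hw, hsum⟩ := mem_sup.1 hz3U
  obtain ⟨α, rfl⟩ := mem_span_singleton.1 hw
  have hα : α ≠ 0 := by
    rintro rfl
    refine hz3 (mem_of_apply_mem_of_injective (h.braid.injective (by omega) le_rfl)
      (orbitSpan_mem_invtSubmodule (by omega) le_rfl) ?_)
    rwa [← hsum, zero_smul, add_zero]
  have hlast : T (n - 1) (braidVec n T v 2) = μ • y + α • braidVec n T v 2 := by
    rw [h.braid.apply_last_braidVec (by omega) (by omega), ← hsum, map_add, map_smul,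
      ← braidVec_eq_apply (by omega),
      mem_eigenspace_iff.1 (h.orbitSpan_le_eigenspace (by omega) le_rfl (by omega) hy)]
  -- `x = T (n - 2) (T (n - 1) z_2)` is a `μ`-eigenvector of `T (n - 1)`, hence so is `T 2 x`,
  -- which therefore lies in `X`; but `T 2 x ≡ α μ • T 2 z_2` modulo `X`.
  have hx : T (n - 2) (T (n - 1) (braidVec n T v 2)) ∈ eigenspace (T (n - 1)) μ := by
    have hmap := h.braid.map_eigenspace (i := n - 2) (by omega) (by omega) μ
    rw [show n - 2 + 1 = n - 1 by omega] at hmap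
    rw [← hmap, ← mul_apply]
    exact mem_map_of_mem
      (mem_eigenspace_iff.2 (h.apply_braidVec (by omega) (by omega) (by omega)))
  have hx2 := hE (mapsTo_genEigenspace_of_comm
    (h.braid.commute 2 (n - 1) (by omega) (by omega) le_rfl).symm μ 1 hx)
  rw [hlast, map_add, map_smul, map_smul,
    h.apply_braidVec (i := n - 2) (by omega) (by omega) (by omega),
    map_add, map_smul, map_smul, map_smul] at hx2
  have hy2 : T 2 (T (n - 2) y) ∈
      orbitSpan n T v 3 ⊔ K ∙ braidVec n T v 2 ⊔ K ∙ braidVec n T v 1 :=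
    mem_sup_left (hQ (orbitSpan_mem_invtSubmodule (by omega) (by omega)
      (orbitSpan_antitone (show 3 ≤ 4 by omega) hy)))
  have := sub_mem hx2 (smul_mem _ μ hy2)
  rwa [add_sub_cancel_left, smul_mem_iff _ hα, smul_mem_iff _ h.eigenvalue_ne_zero] at this

theorem sup_braidVec_one_mem_invtSubmodule_of_le [FiniteDimensional K V]
    (h : InvariantLine n T v μ)
    (hQ : orbitSpan n T v 3 ≤ (orbitSpan n T v 3 ⊔ K ∙ braidVec n T v 2).comap (T 2))
    (hP3 : orbitSpan n T v 3 = orbitSpan n T v 4 ⊔ K ∙ braidVec n T v 3)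
    (hz3 : braidVec n T v 3 ∉ orbitSpan n T v 4)
    (hE : eigenspace (T (n - 2)) μ ≤
      orbitSpan n T v 3 ⊔ K ∙ braidVec n T v 2 ⊔ K ∙ braidVec n T v 1)
    {i : ℕ} (hi : 1 ≤ i) (hin : i ≤ n - 1) :
    orbitSpan n T v 3 ⊔ K ∙ braidVec n T v 2 ⊔ K ∙ braidVec n T v 1 ∈
      (T i).invtSubmodule := by
  have := h.five_le
  rw [mem_invtSubmodule]
  rcases (show i = 1 ∨ i = 2 ∨ 3 ≤ i by omega) with rfl | rfl | hi
  · refine sup_le h.sup_braidVec_two_le_comap ((span_singleton_le_iff_mem _ _).2 (hE ?_))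
    exact mapsTo_genEigenspace_of_comm
      (h.braid.commute 1 (n - 2) le_rfl (by omega) (by omega)).symm μ 1
      (mem_eigenspace_iff.2 (h.apply_braidVec le_rfl (by omega) (by omega)))
  · have hz2 := h.apply_two_braidVec_two_mem hQ hP3 hz3
      (h.eigenspace_last_le_sup_braidVec_one hQ hE)
    refine sup_le (sup_le (hQ.trans (comap_mono le_sup_left))
      ((span_singleton_le_iff_mem _ _).2 hz2)) ((span_singleton_le_iff_mem _ _).2 ?_)
    rw [mem_comap, h.apply_braidVec le_rfl (by omega) (by omega)]
    exact smul_mem _ _ (mem_sup_right (mem_span_singleton_self _))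
  · exact h.sup_braidVec_one_mem_invtSubmodule hQ hi hin

theorem le_finrank_eigenspace [FiniteDimensional K V] (h : InvariantLine n T v μ)
    (hirr : IsIrreducibleRep n T) (hV : n ≤ finrank K V) :
    n - 2 ≤ finrank K (eigenspace (T 1) μ) := by
  have := h.five_le
  by_contra! hE
  have hlt (k : ℕ) (hk : 2 ≤ k) (hkn : k + 2 ≤ n) :=
    h.orbitSpan_succ_lt hirr (fun htop => by rw [htop, finrank_top] at hE; omega) hk hkn
  have hdim (k : ℕ) (hk : 3 ≤ k) (hkn : k + 1 ≤ n) :=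
    finrank_orbitSpan_add h.ne_zero (fun k hk => hlt k (by omega))
      (by have := finrank_mono (h.orbitSpan_le_eigenspace (k := 3) le_rfl le_rfl (by omega))
          omega) hk hkn
  have hN (k : ℕ) (hk : 2 ≤ k) (hkn : k + 2 ≤ n) :=
    h.braidVec_notMem_orbitSpan hlt hdim hk hkn
  have hP (k : ℕ) (hk : 3 ≤ k) (hkn : k + 2 ≤ n) :=
    orbitSpan_eq_sup_braidVec hdim hk hkn (hN k (by omega) hkn)
  have hQ := h.orbitSpan_le_comap_sup le_rfl (by omega) fun _ => (hP 3 le_rfl (by omega)).le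
  have hz1 : braidVec n T v 1 ∉ orbitSpan n T v 3 ⊔ K ∙ braidVec n T v 2 := fun hz1 => by
    have hY := hirr.eq_top h.ne_zero (mem_sup_left mem_orbitSpan_self) fun i hi hin =>
      h.sup_braidVec_two_mem_invtSubmodule_of_mem hQ (hN 2 le_rfl (by omega)) hz1 hi hin
    have := finrank_sup_span_singleton_le (orbitSpan n T v 3) (braidVec n T v 2)
    rw [hY, finrank_top] at this
    have := hdim 3 le_rfl (by omega)
    omega
  have hX := hirr.eq_top h.ne_zero (mem_sup_left (mem_sup_left mem_orbitSpan_self))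
    fun i hi hin => h.sup_braidVec_one_mem_invtSubmodule_of_le hQ (hP 3 le_rfl (by omega))
      (hN 3 (by omega) (by omega)) (h.eigenspace_le_sup_braidVec_one hdim hP
        (hN 2 le_rfl (by omega)) hz1 (by omega)) hi hin
  have := finrank_sup_span_singleton_le (orbitSpan n T v 3 ⊔ K ∙ braidVec n T v 2)
    (braidVec n T v 1)
  have := finrank_sup_span_singleton_le (orbitSpan n T v 3) (braidVec n T v 2)
  rw [hX, finrank_top] at *
  have := hdim 3 le_rfl (by omega)
  omega

end InvariantLine

end Irreducible

theorem Matrix.rank_sub_smul_one_add_finrank_eigenspace {K : Type*} [Field K] {r : ℕ}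
    (A : Matrix (Fin r) (Fin r) K) (μ : K) :
    (A - μ • 1).rank + finrank K (eigenspace (Matrix.toLinAlgEquiv' A) μ) = r := by
  rw [eigenspace_def, ← map_one Matrix.toLinAlgEquiv', ← map_smul, ← map_sub]
  have := LinearMap.finrank_range_add_finrank_ker (Matrix.toLinAlgEquiv' (A - μ • 1))
  rwa [finrank_fin_fun] at this

/-- For `n ≥ 5` and an irreducible representation of `B_n` of dimension `r ≥ n+1`:
if some line `span {v}` (`v ≠ 0`) is invariant under `C 1, …, C (n-3)` and `C (n-1)`,
then there exists `y ≠ 0` with `rank (C 1 - y • I) ≤ r - n + 2`. -/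
theorem stmt_6 (n r : ℕ) (hn : 5 ≤ n) (hr : n + 1 ≤ r)
    (C : ℕ → Matrix (Fin r) (Fin r) ℂ)
    (hinv : ∀ i, 1 ≤ i → i ≤ n - 1 → IsUnit (C i))
    (hcomm : ∀ i j, 1 ≤ i → i ≤ n - 1 → 1 ≤ j → j ≤ n - 1 → i + 2 ≤ j →
      C i * C j = C j * C i)
    (hbraid : ∀ i, 1 ≤ i → i ≤ n - 2 →
      C i * C (i + 1) * C i = C (i + 1) * C i * C (i + 1))
    (hirr : ∀ p : Submodule ℂ (Fin r → ℂ),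
      (∀ i, 1 ≤ i → i ≤ n - 1 → ∀ v ∈ p, (C i).mulVec v ∈ p) → p = ⊥ ∨ p = ⊤)
    (v : Fin r → ℂ) (hv : v ≠ 0)
    (hline : ∀ i, (1 ≤ i ∧ i ≤ n - 3) ∨ i = n - 1 →
      (C i).mulVec v ∈ Submodule.span ℂ {v}) :
    ∃ y : ℂ, y ≠ 0 ∧ (C 1 - y • (1 : Matrix (Fin r) (Fin r) ℂ)).rank ≤ r - n + 2 := by
  set T : ℕ → Module.End ℂ (Fin r → ℂ) := fun i => Matrix.toLinAlgEquiv' (C i)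
  have hT : IsBraidRep n T :=
    { isUnit := fun i hi hin => (hinv i hi hin).map _
      commute := fun i j hi hij hjn =>
        (show Commute (C i) (C j) from hcomm i j hi (by omega) (by omega) hjn hij).map _
      braid := fun i hi hin => by simp only [T, ← map_mul, hbraid i hi (by omega)] }
  obtain ⟨μ, hμ, hμv⟩ := hT.exists_eigenvalue (by omega) hv
    fun i hi hin => hline i (Or.inl ⟨hi, hin⟩)
  have hline : InvariantLine n T v μ := ⟨hT, hn, hv, hμv, hline (n - 1) (Or.inr rfl)⟩
  have hE := hline.le_finrank_eigenspace (fun p hp => hirr p fun i hi hin x hx => hp i hi hin hx)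
    (by rw [finrank_fin_fun]; omega)
  have hrank : (C 1 - μ • 1).rank + finrank ℂ (eigenspace (T 1) μ) = r :=
    (C 1).rank_sub_smul_one_add_finrank_eigenspace μ
  exact ⟨μ, hμ, by omega⟩
end

section
/- Let n ≥ 10 and let C_1, …, C_{n−1} ∈ GL_r(ℂ) be an irreducible representation of B_n of dimension r with n+1 ≤ r ≤ 2n−9. Then there exists an eigenvalue λ of C_{n−1} whose largest Jordan block occurs with multiplicity d ≤ n−5; that is, there exist λ ∈ ℂ and a positive integer m such that ker((C_{n−1} − λI)^m) ≠ ker((C_{n−1} − λI)^{m−1}), ker((C_{n−1} − λI)^{m+1}) = ker((C_{n−1} − λI)^m), and dim ker((C_{n−1} − λI)^m) − dim ker((C_{n−1} − λI)^{m−1}) ≤ n−5. -/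
/-!
Over an algebraically closed field, the multiplicity `d` of the largest Jordan block at `λ` is at
most the dimension of the generalized eigenspace of `λ`. So if there are two eigenvalues, the one
with the smaller generalized eigenspace has `2 d ≤ r`. If there is only one, its generalized
eigenspace is everything; if moreover the largest block has size `m ≥ 2`, then
`dim ker (C - λ)^m ≤ dim ker (C - λ)^(m-1) + dim ker (C - λ) ≤ 2 dim ker (C - λ)^(m-1)`, which again
gives `2 d ≤ r`. The remaining case, `C_{n-1}` scalar, is excluded by irreducibility: the braid
relation and invertibility force `C_{i+1} = c` ⇒ `C_i = c`, so every generator is scalar and every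
line is invariant. Finally `2 d ≤ r ≤ 2n - 9` gives `d ≤ n - 5`.
-/

open Module LinearMap

namespace Module.End

variable {K V : Type*} [Field K] [AddCommGroup V] [Module K V]

theorem ker_pow_le_ker_pow (g : End K V) {a b : ℕ} (hab : a ≤ b) :
    ker (g ^ a) ≤ ker (g ^ b) := by
  obtain ⟨c, rfl⟩ := Nat.exists_eq_add_of_le hab
  simp only [add_comm a c, pow_add, mul_eq_comp]
  exact ker_le_ker_comp _ _

theorem ker_sub_smul_pow_le_maxGenEigenspace (f : End K V) (l : K) (m : ℕ) :
    ker ((f - l • 1) ^ m) ≤ f.maxGenEigenspace l :=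
  fun x hx ↦ (f.mem_maxGenEigenspace l x).mpr ⟨m, hx⟩

variable [FiniteDimensional K V]

/-- `g ^ m` maps `ker (g ^ (m + 1))` into `ker g`, with kernel `ker (g ^ m)`. -/
theorem finrank_ker_pow_succ_le (g : End K V) (m : ℕ) :
    finrank K (ker (g ^ (m + 1))) ≤ finrank K (ker (g ^ m)) + finrank K (ker g) := by
  set W := ker (g ^ (m + 1))
  let φ : W →ₗ[K] V := (g ^ m).comp W.subtype
  have hker : finrank K (ker φ) = finrank K (ker (g ^ m)) := by
    rw [ker_comp]
    exact (Submodule.comapSubtypeEquivOfLe (g.ker_pow_le_ker_pow m.le_succ)).finrank_eq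
  have hrange : range φ ≤ ker g := by
    rintro _ ⟨x, rfl⟩
    rw [mem_ker, comp_apply, ← mul_apply, ← pow_succ']
    exact x.2
  have := finrank_range_add_finrank_ker φ
  have := Submodule.finrank_mono hrange
  omega

theorem exists_ker_pow_stabilizes (g : End K V) (hg : ker g ≠ ⊥) :
    ∃ m, 1 ≤ m ∧ ker (g ^ m) ≠ ker (g ^ (m - 1)) ∧ ker (g ^ (m + 1)) = ker (g ^ m) ∧
      ∀ k, ker (g ^ k) ≤ ker (g ^ m) := by
  classical
  have hex : ∃ m, ker (g ^ (m + 1)) = ker (g ^ m) :=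
    ⟨finrank K V, ker_pow_eq_ker_pow_finrank_of_le (Nat.le_succ _)⟩
  set m := Nat.find hex
  have hstab : ker (g ^ (m + 1)) = ker (g ^ m) := Nat.find_spec hex
  have hm : 1 ≤ m := by
    by_contra! h
    rw [Nat.lt_one_iff.mp h, pow_one, pow_zero, one_eq_id, ker_id] at hstab
    exact hg hstab
  refine ⟨m, hm, ?_, hstab, fun k ↦ ?_⟩
  · have := Nat.find_min hex (show m - 1 < m by omega)
    rwa [Nat.sub_add_cancel hm] at this
  · rcases le_total k m with hk | hk
    · exact g.ker_pow_le_ker_pow hk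
    · rw [ker_pow_constant hstab.symm (k - m), Nat.add_sub_cancel' hk]

theorem exists_two_mul_finrank_maxGenEigenspace_le (f : End K V) {μ ν : K}
    (hμ : f.HasEigenvalue μ) (hν : f.HasEigenvalue ν) (hμν : μ ≠ ν) :
    ∃ l, f.HasEigenvalue l ∧ 2 * finrank K (f.maxGenEigenspace l) ≤ finrank K V := by
  have hdisj := (f.independent_maxGenEigenspace).pairwiseDisjoint hμν
  have hsum := Submodule.finrank_sup_add_finrank_inf_eq (f.maxGenEigenspace μ)
    (f.maxGenEigenspace ν)
  rw [disjoint_iff.mp hdisj, finrank_bot, add_zero] at hsum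
  have := Submodule.finrank_le (f.maxGenEigenspace μ ⊔ f.maxGenEigenspace ν)
  rcases le_total (finrank K (f.maxGenEigenspace μ)) (finrank K (f.maxGenEigenspace ν)) with h | h
  · exact ⟨μ, hμ, by omega⟩
  · exact ⟨ν, hν, by omega⟩

theorem maxGenEigenspace_eq_top [IsAlgClosed K] (f : End K V) {l : K}
    (h : ∀ μ, f.HasEigenvalue μ → μ = l) : f.maxGenEigenspace l = ⊤ := by
  rw [eq_top_iff, ← f.iSup_maxGenEigenspace_eq_top]
  refine iSup_le fun μ ↦ ?_
  by_cases hμ : f.maxGenEigenspace μ = ⊥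
  · simp [hμ]
  · rw [h μ ((hasUnifEigenvalue_iff_hasUnifEigenvalue_one WithTop.top_pos).mp hμ)]

theorem two_mul_finrank_ker_pow_sub_le_of_ker_pow_eq_top (g : End K V) {m : ℕ} (hm : 2 ≤ m)
    (htop : ker (g ^ m) = ⊤) :
    2 * (finrank K (ker (g ^ m)) - finrank K (ker (g ^ (m - 1)))) ≤ finrank K V := by
  have h₁ := g.finrank_ker_pow_succ_le (m - 1)
  have h₂ := Submodule.finrank_mono (g.ker_pow_le_ker_pow (show 1 ≤ m - 1 by omega))
  rw [pow_one] at h₂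
  rw [Nat.sub_add_cancel (by omega), htop, finrank_top] at h₁
  rw [htop, finrank_top]
  omega

theorem exists_two_mul_finrank_ker_pow_sub_le [IsAlgClosed K] (f : End K V)
    (hf : ∀ c : K, f ≠ c • 1) :
    ∃ (l : K) (m : ℕ), 1 ≤ m ∧ ker ((f - l • 1) ^ m) ≠ ker ((f - l • 1) ^ (m - 1)) ∧
      ker ((f - l • 1) ^ (m + 1)) = ker ((f - l • 1) ^ m) ∧
      2 * (finrank K (ker ((f - l • 1) ^ m)) - finrank K (ker ((f - l • 1) ^ (m - 1)))) ≤
        finrank K V := by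
  have : Nontrivial V := by
    by_contra h
    rw [not_nontrivial_iff_subsingleton] at h
    exact hf 0 (Subsingleton.elim _ _)
  obtain ⟨l₀, hl₀⟩ := f.exists_eigenvalue
  by_cases huniq : ∀ μ, f.HasEigenvalue μ → μ = l₀
  · obtain ⟨m, hm, hne, hstab, hmax⟩ :=
      (f - l₀ • 1).exists_ker_pow_stabilizes (by rwa [← eigenspace_def, ← hasEigenvalue_iff])
    have htop : ker ((f - l₀ • 1) ^ m) = ⊤ := by
      rw [eq_top_iff, ← f.maxGenEigenspace_eq_top huniq]
      intro x hx
      obtain ⟨k, hk⟩ := (f.mem_maxGenEigenspace l₀ x).mp hx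
      exact hmax k hk
    have hm₂ : 2 ≤ m := by
      by_contra! h
      rw [show m = 1 by omega, pow_one, ker_eq_top, sub_eq_zero] at htop
      exact hf l₀ htop
    exact ⟨l₀, m, hm, hne, hstab,
      two_mul_finrank_ker_pow_sub_le_of_ker_pow_eq_top _ hm₂ htop⟩
  · push Not at huniq
    obtain ⟨μ, hμ, hμl₀⟩ := huniq
    obtain ⟨l, hl, hdim⟩ := f.exists_two_mul_finrank_maxGenEigenspace_le hμ hl₀ hμl₀
    obtain ⟨m, hm, hne, hstab, -⟩ :=
      (f - l • 1).exists_ker_pow_stabilizes (by rwa [← eigenspace_def, ← hasEigenvalue_iff])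
    refine ⟨l, m, hm, hne, hstab, ?_⟩
    have := Submodule.finrank_mono (f.ker_sub_smul_pow_le_maxGenEigenspace l m)
    omega

end Module.End

section Braid

variable {K : Type*} [Field K]

theorem eq_smul_one_of_braid {A : Type*} [Ring A] [Algebra K A] {a b : A} (ha : IsUnit a)
    {c : K} (hc : c ≠ 0) (hb : b = c • 1) (hab : a * b * a = b * a * b) : a = c • 1 := by
  subst hb
  have h : c • (a * a) = c • (c • 1 * a) := by
    simpa [smul_mul_assoc, mul_smul_comm, smul_smul] using hab
  exact ha.mul_right_cancel (smul_right_injective A hc h)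

theorem braid_eq_smul_one_of_last {A : Type*} [Ring A] [Algebra K A] {n : ℕ} {C : ℕ → A}
    (hinv : ∀ i, 1 ≤ i → i ≤ n - 1 → IsUnit (C i))
    (hbraid : ∀ i, 1 ≤ i → i ≤ n - 2 → C i * C (i + 1) * C i = C (i + 1) * C i * C (i + 1))
    {c : K} (hc : c ≠ 0) (hlast : C (n - 1) = c • 1) {i : ℕ} (hi₁ : 1 ≤ i) (hi : i ≤ n - 1) :
    C i = c • 1 := by
  refine Nat.decreasingInduction (motive := fun k _ ↦ 1 ≤ k → C k = c • 1)
    (fun k hk ih hk₁ ↦ ?_) (fun _ ↦ hlast) hi hi₁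
  exact eq_smul_one_of_braid (hinv k hk₁ (by omega)) hc (ih (by omega)) (hbraid k hk₁ (by omega))

theorem braid_last_ne_smul_one_of_irreducible {n r : ℕ} (hn : 2 ≤ n) (hr : 2 ≤ r)
    (C : ℕ → Matrix (Fin r) (Fin r) K)
    (hinv : ∀ i, 1 ≤ i → i ≤ n - 1 → IsUnit (C i))
    (hbraid : ∀ i, 1 ≤ i → i ≤ n - 2 → C i * C (i + 1) * C i = C (i + 1) * C i * C (i + 1))
    (hirr : ∀ p : Submodule K (Fin r → K),
      (∀ i, 1 ≤ i → i ≤ n - 1 → ∀ v ∈ p, (C i).mulVec v ∈ p) → p = ⊥ ∨ p = ⊤)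
    (c : K) : C (n - 1) ≠ c • 1 := by
  intro hlast
  have : Nonempty (Fin r) := ⟨⟨0, by omega⟩⟩
  have hc : c ≠ 0 := by
    rintro rfl
    rw [zero_smul] at hlast
    exact not_isUnit_zero (hlast ▸ hinv (n - 1) (by omega) le_rfl)
  obtain ⟨v, hv⟩ := exists_ne (0 : Fin r → K)
  have hinvar : ∀ i, 1 ≤ i → i ≤ n - 1 → ∀ w ∈ K ∙ v, (C i).mulVec w ∈ K ∙ v := by
    intro i hi₁ hi w hw
    rw [braid_eq_smul_one_of_last hinv hbraid hc hlast hi₁ hi, Matrix.smul_mulVec,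
      Matrix.one_mulVec]
    exact Submodule.smul_mem _ c hw
  rcases hirr _ hinvar with h | h
  · exact hv (Submodule.span_singleton_eq_bot.mp h)
  · have := finrank_span_singleton (K := K) hv
    rw [h, finrank_top, Module.finrank_fin_fun] at this
    omega

end Braid

theorem stmt_8_general (n r : ℕ) (hr₁ : n + 1 ≤ r) (hr₂ : r ≤ 2 * n - 9)
    (C : ℕ → Matrix (Fin r) (Fin r) ℂ)
    (hinv : ∀ i, 1 ≤ i → i ≤ n - 1 → IsUnit (C i))
    (hbraid : ∀ i, 1 ≤ i → i ≤ n - 2 →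
      C i * C (i + 1) * C i = C (i + 1) * C i * C (i + 1))
    (hirr : ∀ p : Submodule ℂ (Fin r → ℂ),
      (∀ i, 1 ≤ i → i ≤ n - 1 → ∀ v ∈ p, (C i).mulVec v ∈ p) → p = ⊥ ∨ p = ⊤) :
    ∃ (l : ℂ) (m : ℕ), 1 ≤ m ∧
      LinearMap.ker (((C (n - 1) - l • (1 : Matrix (Fin r) (Fin r) ℂ)) ^ m).mulVecLin) ≠
        LinearMap.ker (((C (n - 1) - l • (1 : Matrix (Fin r) (Fin r) ℂ)) ^ (m - 1)).mulVecLin) ∧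
      LinearMap.ker (((C (n - 1) - l • (1 : Matrix (Fin r) (Fin r) ℂ)) ^ (m + 1)).mulVecLin) =
        LinearMap.ker (((C (n - 1) - l • (1 : Matrix (Fin r) (Fin r) ℂ)) ^ m).mulVecLin) ∧
      Module.finrank ℂ
          (LinearMap.ker (((C (n - 1) - l • (1 : Matrix (Fin r) (Fin r) ℂ)) ^ m).mulVecLin)) -
        Module.finrank ℂ
          (LinearMap.ker (((C (n - 1) - l • (1 : Matrix (Fin r) (Fin r) ℂ)) ^ (m - 1)).mulVecLin))
        ≤ n - 5 := by
  let f : Module.End ℂ (Fin r → ℂ) := Matrix.toLinAlgEquiv' (C (n - 1))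
  have hker (l : ℂ) (k : ℕ) :
      ker (((C (n - 1) - l • (1 : Matrix (Fin r) (Fin r) ℂ)) ^ k).mulVecLin) =
        ker ((f - l • 1) ^ k) := by
    change ker (Matrix.toLinAlgEquiv' _) = _
    rw [map_pow, map_sub, map_smul, map_one]
  have hf (c : ℂ) : f ≠ c • 1 := fun h ↦
    braid_last_ne_smul_one_of_irreducible (by omega) (by omega) C hinv hbraid hirr c
      (Matrix.toLinAlgEquiv'.injective (by rw [map_smul, map_one]; exact h))
  obtain ⟨l, m, hm, hne, hstab, hd⟩ := Module.End.exists_two_mul_finrank_ker_pow_sub_le f hf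
  rw [Module.finrank_fin_fun] at hd
  refine ⟨l, m, hm, by rwa [hker, hker], by rwa [hker, hker], ?_⟩
  rw [hker, hker]
  omega

/-- For `n ≥ 10` and an irreducible representation of `B_n` of dimension `r` with
`n+1 ≤ r ≤ 2n-9`, there is an eigenvalue `λ` of `C (n-1)` whose largest Jordan block
occurs with multiplicity at most `n - 5`. -/
theorem stmt_8 (n r : ℕ) (hn : 10 ≤ n) (hr₁ : n + 1 ≤ r) (hr₂ : r ≤ 2 * n - 9)
    (C : ℕ → Matrix (Fin r) (Fin r) ℂ)
    (hinv : ∀ i, 1 ≤ i → i ≤ n - 1 → IsUnit (C i))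
    (hcomm : ∀ i j, 1 ≤ i → i ≤ n - 1 → 1 ≤ j → j ≤ n - 1 → i + 2 ≤ j →
      C i * C j = C j * C i)
    (hbraid : ∀ i, 1 ≤ i → i ≤ n - 2 →
      C i * C (i + 1) * C i = C (i + 1) * C i * C (i + 1))
    (hirr : ∀ p : Submodule ℂ (Fin r → ℂ),
      (∀ i, 1 ≤ i → i ≤ n - 1 → ∀ v ∈ p, (C i).mulVec v ∈ p) → p = ⊥ ∨ p = ⊤) :
    ∃ (l : ℂ) (m : ℕ), 1 ≤ m ∧
      LinearMap.ker (((C (n - 1) - l • (1 : Matrix (Fin r) (Fin r) ℂ)) ^ m).mulVecLin) ≠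
        LinearMap.ker (((C (n - 1) - l • (1 : Matrix (Fin r) (Fin r) ℂ)) ^ (m - 1)).mulVecLin) ∧
      LinearMap.ker (((C (n - 1) - l • (1 : Matrix (Fin r) (Fin r) ℂ)) ^ (m + 1)).mulVecLin) =
        LinearMap.ker (((C (n - 1) - l • (1 : Matrix (Fin r) (Fin r) ℂ)) ^ m).mulVecLin) ∧
      Module.finrank ℂ
          (LinearMap.ker (((C (n - 1) - l • (1 : Matrix (Fin r) (Fin r) ℂ)) ^ m).mulVecLin)) -
        Module.finrank ℂ
          (LinearMap.ker (((C (n - 1) - l • (1 : Matrix (Fin r) (Fin r) ℂ)) ^ (m - 1)).mulVecLin))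
        ≤ n - 5 :=
  stmt_8_general n r hr₁ hr₂ C hinv hbraid hirr
end

section
/- Let n ≥ 3 and let C_1, …, C_{n−1} ∈ GL_r(ℂ) be an irreducible representation of B_n of dimension r ≥ n+1, and set T = C_1 C_2 ⋯ C_{n−1}. Suppose v ∈ ℂ^r is a nonzero vector such that C_i v ∈ span{v} for every i ∈ {1, …, n−3} ∪ {n−1}. Then for every integer i, the n−2 consecutive vectors T^i v, T^{i+1} v, …, T^{i+n−3} v are linearly independent. -/
/-!
Conjugation by `T = C₁ ⋯ C_{n-1}` shifts the generators, `T C_k = C_{k+1} T`, by the braid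
relations. If `v, Tv, …, T^{n-3} v` were dependent, some Krylov space
`W = span {v, Tv, …, T^{d-1} v}` with `1 ≤ d ≤ n-3` would be `T`-invariant, so `T W = W`.
Since `C_d T^k v = T^k C_{d-k} v ∈ ℂ ∙ T^k v`, the space `W` is `C_d`-invariant, and
conjugating by powers of `T` transports this to every `C_b`. As `0 < dim W ≤ d < r`, this
contradicts irreducibility. Translating by the invertible `T^i` gives the claim for every `i`.
-/

open Module Submodule

theorem mul_mul_mul_mul_eq_of_braid {M : Type*} [Monoid M] {a b p q : M}
    (hq : Commute a q) (hp : Commute b p) (hab : a * b * a = b * a * b) :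
    p * a * b * q * a = b * (p * a * b * q) := by
  calc p * a * b * q * a = p * (a * b * a) * q := by simp only [mul_assoc, hq.symm.eq]
    _ = b * (p * a * b * q) := by rw [hab]; simp only [← mul_assoc, hp.eq]

theorem list_prod_range'_mul_of_braid {M : Type*} [Monoid M] {C : ℕ → M} {N : ℕ}
    (hcomm : ∀ i j, 1 ≤ i → i ≤ N → 1 ≤ j → j ≤ N → i + 2 ≤ j →
      C i * C j = C j * C i)
    (hbraid : ∀ i, 1 ≤ i → i < N → C i * C (i + 1) * C i = C (i + 1) * C i * C (i + 1))
    {k : ℕ} (hk : 1 ≤ k) (hkN : k < N) :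
    ((List.range' 1 N).map C).prod * C k = C (k + 1) * ((List.range' 1 N).map C).prod := by
  obtain ⟨a, rfl⟩ : ∃ a, k = a + 1 := ⟨k - 1, by omega⟩
  obtain ⟨b, rfl⟩ : ∃ b, N = a + 2 + b := ⟨N - a - 2, by omega⟩
  have hsplit : List.range' 1 (a + 2 + b) =
      List.range' 1 a ++ [a + 1, a + 2] ++ List.range' (a + 3) b := by
    rw [add_assoc, ← List.range'_append, List.append_assoc, ← List.range'_append]
    simp [List.range'_succ]
    omega
  have hlo : Commute (C (a + 2)) ((List.range' 1 a).map C).prod := by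
    refine Commute.list_prod_right _ _ fun x hx => ?_
    obtain ⟨j, hj, rfl⟩ := List.mem_map.mp hx
    rw [List.mem_range'_1] at hj
    exact (hcomm j (a + 2) (by omega) (by omega) (by omega) (by omega) (by omega)).symm
  have hhi : Commute (C (a + 1)) ((List.range' (a + 3) b).map C).prod := by
    refine Commute.list_prod_right _ _ fun x hx => ?_
    obtain ⟨j, hj, rfl⟩ := List.mem_map.mp hx
    rw [List.mem_range'_1] at hj
    exact hcomm (a + 1) j (by omega) (by omega) (by omega) (by omega) (by omega)
  have := mul_mul_mul_mul_eq_of_braid hhi hlo (hbraid (a + 1) le_add_self (by omega))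
  simpa [hsplit, mul_assoc] using this

theorem pow_mul_eq_mul_pow_of_conj {M : Type*} [Monoid M] {C : ℕ → M} {T : M} {a p : ℕ}
    (h : ∀ k, a ≤ k → k < a + p → T * C k = C (k + 1) * T) :
    T ^ p * C a = C (a + p) * T ^ p := by
  induction p with
  | zero => simp
  | succ p ih =>
    rw [pow_succ', mul_assoc, ih fun k h1 h2 => h k h1 (by omega), ← mul_assoc,
      h (a + p) le_self_add (by omega), mul_assoc, ← add_assoc]

namespace Module.End

section Semiring

variable {R M : Type*} [Semiring R] [AddCommMonoid M] [Module R M]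

theorem map_pow_eq_of_map_eq {f : End R M} {W : Submodule R M} (hW : W.map f = W) (p : ℕ) :
    W.map (f ^ p) = W := by
  induction p with
  | zero => rw [pow_zero, one_eq_id, map_id]
  | succ p ih => rw [pow_succ, mul_eq_comp, map_comp, hW, ih]

theorem mem_invtSubmodule_iff_of_mul_eq_mul {g a b : End R M} {W : Submodule R M}
    (hg : Function.Injective g) (hW : W.map g = W) (h : g * a = b * g) :
    W ∈ a.invtSubmodule ↔ W ∈ b.invtSubmodule := by
  rw [mem_invtSubmodule_iff_map_le, mem_invtSubmodule_iff_map_le,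
    ← map_le_map_iff_of_injective hg, ← map_comp, ← mul_eq_comp, h, mul_eq_comp, map_comp, hW]

theorem mem_invtSubmodule_iff_of_conj {C : ℕ → End R M} {T : End R M} {N : ℕ}
    (hconj : ∀ k, 1 ≤ k → k < N → T * C k = C (k + 1) * T) (hT : Function.Injective T)
    {W : Submodule R M} (hW : W.map T = W) {a b : ℕ} (ha : 1 ≤ a) (haN : a ≤ N) (hb : 1 ≤ b)
    (hbN : b ≤ N) : W ∈ (C a).invtSubmodule ↔ W ∈ (C b).invtSubmodule := by
  wlog hab : a ≤ b generalizing a b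
  · exact (this hb hbN ha haN (by omega)).symm
  obtain ⟨p, rfl⟩ : ∃ p, b = a + p := ⟨b - a, by omega⟩
  refine mem_invtSubmodule_iff_of_mul_eq_mul ?_ (map_pow_eq_of_map_eq hW p)
    (pow_mul_eq_mul_pow_of_conj fun k h1 h2 => hconj k (by omega) (by omega))
  rw [coe_pow]
  exact hT.iterate p

def krylovSubspace (f : End R M) (v : M) (d : ℕ) : Submodule R M :=
  span R (Set.range fun k : Fin d => (f ^ (k : ℕ)) v)

theorem pow_apply_mem_krylovSubspace (f : End R M) (v : M) {k d : ℕ} (hk : k < d) :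
    (f ^ k) v ∈ f.krylovSubspace v d :=
  subset_span ⟨⟨k, hk⟩, rfl⟩

theorem krylovSubspace_mem_invtSubmodule {f : End R M} {v : M} {d : ℕ}
    (hd : (f ^ d) v ∈ f.krylovSubspace v d) : f.krylovSubspace v d ∈ f.invtSubmodule := by
  rw [mem_invtSubmodule, krylovSubspace, span_le]
  rintro _ ⟨⟨k, hk⟩, rfl⟩
  rw [SetLike.mem_coe, mem_comap, ← mul_apply, ← pow_succ']
  change (f ^ (k + 1)) v ∈ f.krylovSubspace v d
  rcases Nat.lt_or_ge (k + 1) d with hlt | hge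
  · exact pow_apply_mem_krylovSubspace f v hlt
  · rwa [show k + 1 = d by omega]

theorem krylovSubspace_mem_invtSubmodule_of_conj {C : ℕ → End R M} {T : End R M} {d : ℕ}
    {v : M}
    (hconj : ∀ k, 1 ≤ k → k < d → T * C k = C (k + 1) * T)
    (hline : ∀ s, 1 ≤ s → s ≤ d → C s v ∈ R ∙ v) :
    T.krylovSubspace v d ∈ (C d).invtSubmodule := by
  rw [mem_invtSubmodule, krylovSubspace, span_le]
  rintro _ ⟨⟨k, hk⟩, rfl⟩
  obtain ⟨s, rfl⟩ : ∃ s, d = s + k := ⟨d - k, by omega⟩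
  obtain ⟨c, hc⟩ := mem_span_singleton.mp (hline s (by omega) (by omega))
  change C (s + k) ((T ^ k) v) ∈ T.krylovSubspace v (s + k)
  rw [← mul_apply, ← pow_mul_eq_mul_pow_of_conj fun j h1 h2 => hconj j (by omega) (by omega),
    mul_apply, ← hc, map_smul]
  exact smul_mem _ c (pow_apply_mem_krylovSubspace T v (by omega))

end Semiring

section DivisionRing

variable {K V : Type*} [DivisionRing K] [AddCommGroup V] [Module K V]

theorem map_eq_of_mem_invtSubmodule {f : End K V} {W : Submodule K V} [FiniteDimensional K W]
    (hf : Function.Injective f) (hW : W ∈ f.invtSubmodule) : W.map f = W :=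
  eq_of_le_of_finrank_le ((mem_invtSubmodule_iff_map_le f).mp hW)
    (equivMapOfInjective f hf W).finrank_eq.le

theorem finrank_krylovSubspace_le (f : End K V) (v : V) (d : ℕ) :
    finrank K (f.krylovSubspace v d) ≤ d :=
  (finrank_range_le_card (R := K) _).trans_eq (Fintype.card_fin d)

theorem exists_pow_apply_mem_krylovSubspace_of_not_linearIndependent {f : End K V} {v : V}
    {m : ℕ} (h : ¬LinearIndependent K fun k : Fin m => (f ^ (k : ℕ)) v) :
    ∃ d < m, (f ^ d) v ∈ f.krylovSubspace v d := by
  induction m with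
  | zero => exact absurd linearIndependent_empty_type h
  | succ m ih =>
    have hsnoc : (fun k : Fin (m + 1) => (f ^ (k : ℕ)) v) =
        Fin.snoc (fun k : Fin m => (f ^ (k : ℕ)) v) ((f ^ m) v) := by
      funext k
      refine Fin.lastCases ?_ (fun j => ?_) k <;> simp
    rw [hsnoc, linearIndependent_finSnoc, not_and_or, not_not] at h
    rcases h with h | h
    · obtain ⟨d, hd, hmem⟩ := ih h
      exact ⟨d, hd.trans m.lt_succ_self, hmem⟩
    · exact ⟨m, m.lt_succ_self, h⟩

theorem linearIndependent_pow_apply_of_conj [FiniteDimensional K V] {C : ℕ → End K V}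
    {T : End K V} {N m : ℕ} {v : V}
    (hconj : ∀ k, 1 ≤ k → k < N → T * C k = C (k + 1) * T) (hT : Function.Injective T)
    (hirr : ∀ W : Submodule K V,
      (∀ i, 1 ≤ i → i ≤ N → W ∈ (C i).invtSubmodule) → W = ⊥ ∨ W = ⊤)
    (hv : v ≠ 0) (hline : ∀ s, 1 ≤ s → s < m → C s v ∈ K ∙ v) (hmN : m ≤ N + 1)
    (hmV : m ≤ finrank K V) :
    LinearIndependent K fun k : Fin m => (T ^ (k : ℕ)) v := by
  by_contra h
  obtain ⟨d, hdm, hd⟩ := exists_pow_apply_mem_krylovSubspace_of_not_linearIndependent h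
  have hd0 : 0 < d := Nat.pos_of_ne_zero fun h0 => hv (by subst h0; simpa [krylovSubspace] using hd)
  have hWT := krylovSubspace_mem_invtSubmodule hd
  have hWC (i : ℕ) (hi : 1 ≤ i) (hiN : i ≤ N) :
      T.krylovSubspace v d ∈ (C i).invtSubmodule :=
    (mem_invtSubmodule_iff_of_conj hconj hT (map_eq_of_mem_invtSubmodule hT hWT) hd0 (by omega)
      hi hiN).mp <| krylovSubspace_mem_invtSubmodule_of_conj
        (fun k hk hkd => hconj k hk (by omega)) (fun s hs hsd => hline s hs (by omega))
  rcases hirr _ hWC with hbot | htop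
  · have hvW : v ∈ T.krylovSubspace v d := by simpa using pow_apply_mem_krylovSubspace T v hd0
    exact hv ((mem_bot K).mp (hbot ▸ hvW))
  · have := finrank_krylovSubspace_le T v d
    rw [htop, finrank_top] at this
    omega

end DivisionRing

end Module.End

theorem Matrix.linearIndependent_zpow_add_mulVec {ι K : Type*} [Field K] [Fintype ι]
    [DecidableEq ι] {T : Matrix ι ι K} (hT : IsUnit T) {m : ℕ} {v : ι → K}
    (h : LinearIndependent K fun k : Fin m => (T ^ (k : ℕ)).mulVec v) (i : ℤ) :
    LinearIndependent K fun k : Fin m => (T ^ (i + (k : ℕ))).mulVec v := by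
  have hdet : IsUnit T.det := (Matrix.isUnit_iff_isUnit_det T).mp hT
  have hinj : Function.Injective (T ^ i).mulVec := Matrix.mulVec_injective_iff_isUnit.mpr
    ((Matrix.isUnit_iff_isUnit_det _).mpr (hdet.det_zpow i))
  have hshift : (fun k : Fin m => (T ^ (i + (k : ℕ))).mulVec v) =
      (T ^ i).mulVecLin ∘ fun k : Fin m => (T ^ (k : ℕ)).mulVec v := by
    funext k
    simp [Matrix.zpow_add hdet, Matrix.mulVec_mulVec]
  rw [hshift]
  exact h.map' _ (LinearMap.ker_eq_bot.mpr hinj)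

theorem stmt_10_general (n r : ℕ) (hr : n + 1 ≤ r)
    (C : ℕ → Matrix (Fin r) (Fin r) ℂ)
    (hinv : ∀ i, 1 ≤ i → i ≤ n - 1 → IsUnit (C i))
    (hcomm : ∀ i j, 1 ≤ i → i ≤ n - 1 → 1 ≤ j → j ≤ n - 1 → i + 2 ≤ j →
      C i * C j = C j * C i)
    (hbraid : ∀ i, 1 ≤ i → i ≤ n - 2 →
      C i * C (i + 1) * C i = C (i + 1) * C i * C (i + 1))
    (hirr : ∀ p : Submodule ℂ (Fin r → ℂ),
      (∀ i, 1 ≤ i → i ≤ n - 1 → ∀ v ∈ p, (C i).mulVec v ∈ p) → p = ⊥ ∨ p = ⊤)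
    (T : Matrix (Fin r) (Fin r) ℂ)
    (hT : T = (List.map (fun i => C (i + 1)) (List.range (n - 1))).prod)
    (v : Fin r → ℂ) (hv : v ≠ 0)
    (hline : ∀ i, (1 ≤ i ∧ i ≤ n - 3) ∨ i = n - 1 →
      (C i).mulVec v ∈ Submodule.span ℂ {v}) :
    ∀ i : ℤ, LinearIndependent ℂ
      (fun k : Fin (n - 2) => (T ^ (i + (k : ℕ))).mulVec v) := by
  replace hT : T = ((List.range' 1 (n - 1)).map C).prod := by
    rw [hT, List.range'_eq_map_range, List.map_map]
    simp [Function.comp_def, add_comm]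
  have hTunit : IsUnit T := hT ▸ List.prod_isUnit fun x hx => by
    obtain ⟨j, hj, rfl⟩ := List.mem_map.mp hx
    rw [List.mem_range'_1] at hj
    exact hinv j (by omega) (by omega)
  have hconj (k : ℕ) (hk : 1 ≤ k) (hkn : k < n - 1) : T * C k = C (k + 1) * T :=
    hT ▸ list_prod_range'_mul_of_braid hcomm (fun i h1 h2 => hbraid i h1 (by omega)) hk hkn
  have hli := Module.End.linearIndependent_pow_apply_of_conj (C := fun i => Matrix.toLin' (C i))
    (T := Matrix.toLin' T) (N := n - 1) (m := n - 2) (v := v)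
    (fun k hk hkn => by simp only [Module.End.mul_eq_comp, ← Matrix.toLin'_mul, hconj k hk hkn])
    (Matrix.mulVec_injective_iff_isUnit.mpr hTunit)
    (fun p hp => hirr p fun i h1 h2 => hp i h1 h2) hv
    (fun s h1 h2 => hline s (Or.inl ⟨h1, by omega⟩)) (by omega)
    (by rw [finrank_fin_fun]; omega)
  simp only [← Matrix.toLin'_pow, Matrix.toLin'_apply] at hli
  exact Matrix.linearIndependent_zpow_add_mulVec hTunit hli

/-- For `n ≥ 3` and an irreducible representation of `B_n` of dimension `r ≥ n+1`,
with `T = C 1 * C 2 * ⋯ * C (n-1)` (invertible, so integer powers make sense): if the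
line spanned by a nonzero vector `v` is invariant under `C 1, …, C (n-3)` and
`C (n-1)`, then for every integer `i` the `n-2` consecutive vectors
`T^i v, T^{i+1} v, …, T^{i+n-3} v` are linearly independent. -/
theorem stmt_10 (n r : ℕ) (hn : 3 ≤ n) (hr : n + 1 ≤ r)
    (C : ℕ → Matrix (Fin r) (Fin r) ℂ)
    (hinv : ∀ i, 1 ≤ i → i ≤ n - 1 → IsUnit (C i))
    (hcomm : ∀ i j, 1 ≤ i → i ≤ n - 1 → 1 ≤ j → j ≤ n - 1 → i + 2 ≤ j →
      C i * C j = C j * C i)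
    (hbraid : ∀ i, 1 ≤ i → i ≤ n - 2 →
      C i * C (i + 1) * C i = C (i + 1) * C i * C (i + 1))
    (hirr : ∀ p : Submodule ℂ (Fin r → ℂ),
      (∀ i, 1 ≤ i → i ≤ n - 1 → ∀ v ∈ p, (C i).mulVec v ∈ p) → p = ⊥ ∨ p = ⊤)
    (T : Matrix (Fin r) (Fin r) ℂ)
    (hT : T = (List.map (fun i => C (i + 1)) (List.range (n - 1))).prod)
    (v : Fin r → ℂ) (hv : v ≠ 0)
    (hline : ∀ i, (1 ≤ i ∧ i ≤ n - 3) ∨ i = n - 1 →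
      (C i).mulVec v ∈ Submodule.span ℂ {v}) :
    ∀ i : ℤ, LinearIndependent ℂ
      (fun k : Fin (n - 2) => (T ^ (i + (k : ℕ))).mulVec v) :=
  stmt_10_general n r hr C hinv hcomm hbraid hirr T hT v hv hline
end

section
/- Let n ≥ 3 and let C_1, …, C_{n−1} ∈ GL_r(ℂ) be a representation of B_n of dimension r; set A_i = C_i − I, T = C_1 ⋯ C_{n−1}, and A_0 = T C_{n−1} T^{−1} − I, indices in ℤ_n. Then for any two distinct indices i, j ∈ ℤ_n: if ||i−j|| = 1 then dim(Im A_i ∩ Im A_j) ≥ dim Im(A_i + A_i² + A_i A_j A_i), and if ||i−j|| ≥ 2 then dim(Im A_i ∩ Im A_j) ≥ dim Im(A_i A_j). -/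
/-!
Conjugation by `T = c₁ ⋯ c_{n-1}` shifts the generators, `T cᵢ T⁻¹ = c_{i+1}` for `i ≤ n - 2`;
hence `T (c₁ ⋯ c_{n-2}) T⁻¹ = c₂ ⋯ c_{n-1}`, which gives `c₀ := T c_{n-1} T⁻¹ = T⁻¹ c₁ T`.
Conjugating the relations among `c₁, …, c_{n-1}` by `T` or `T⁻¹` then shows that the `cᵢ`,
`i ∈ ℤ_n`, satisfy the affine braid relations: neighbours braid, all other pairs commute.
For `Cᵢ = 1 + Aᵢ` the braid relation says `Aᵢ + Aᵢ² + Aᵢ Aⱼ Aᵢ = Aⱼ + Aⱼ² + Aⱼ Aᵢ Aⱼ`, so this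
matrix factors both as `Aᵢ X` and as `Aⱼ Y`; commuting `Cᵢ, Cⱼ` give `Aᵢ Aⱼ = Aⱼ Aᵢ`. Either way
the image lies in `Im Aᵢ ∩ Im Aⱼ`.
-/

def BraidRelation {M : Type*} [Mul M] (a b : M) : Prop := a * b * a = b * a * b

namespace BraidRelation

variable {M N F : Type*} [Mul M] [Mul N] {a b : M}

theorem symm (h : BraidRelation a b) : BraidRelation b a := Eq.symm h

theorem map [FunLike F M N] [MulHomClass F M N] (h : BraidRelation a b) (f : F) :
    BraidRelation (f a) (f b) := by
  simp only [BraidRelation, ← map_mul]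
  exact congrArg f h

end BraidRelation

structure IsBraidFamily {G : Type*} [Group G] (n : ℕ) (c : ℕ → G) : Prop where
  commute : ∀ i j, 1 ≤ i → i + 2 ≤ j → j ≤ n - 1 → Commute (c i) (c j)
  braidRelation : ∀ i, 1 ≤ i → i ≤ n - 2 → BraidRelation (c i) (c (i + 1))

variable {G : Type*} [Group G]

def partialProd (c : ℕ → G) (m : ℕ) : G := ((List.range m).map fun i => c (i + 1)).prod

theorem partialProd_succ (c : ℕ → G) (m : ℕ) :
    partialProd c (m + 1) = partialProd c m * c (m + 1) := by
  simp [partialProd, List.range_succ]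

theorem partialProd_succ' (c : ℕ → G) (m : ℕ) :
    partialProd c (m + 1) = c 1 * ((List.range m).map fun i => c (i + 2)).prod := by
  simp [partialProd, List.range_succ_eq_map, Function.comp_def]

def affineGen (n : ℕ) (c : ℕ → G) (k : ℕ) : G :=
  if k = 0 then partialProd c (n - 1) * c (n - 1) * (partialProd c (n - 1))⁻¹ else c k

theorem affineGen_zero (n : ℕ) (c : ℕ → G) :
    affineGen n c 0 = partialProd c (n - 1) * c (n - 1) * (partialProd c (n - 1))⁻¹ := rfl

theorem affineGen_of_ne_zero (n : ℕ) (c : ℕ → G) {k : ℕ} (hk : k ≠ 0) :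
    affineGen n c k = c k := if_neg hk

namespace IsBraidFamily

variable {n : ℕ} {c : ℕ → G} (hc : IsBraidFamily n c)
include hc

theorem commute_partialProd {m j : ℕ} (hj : m + 2 ≤ j) (hjn : j ≤ n - 1) :
    Commute (c j) (partialProd c m) :=
  Commute.list_prod_right _ _ fun x hx => by
    obtain ⟨i, hi, rfl⟩ := List.mem_map.1 hx
    exact (hc.commute (i + 1) j le_add_self (by grind) hjn).symm

theorem partialProd_mul {i m : ℕ} (hi : 1 ≤ i) (him : i < m) (hm : m ≤ n - 1) :
    partialProd c m * c i = c (i + 1) * partialProd c m := by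
  induction m, him using Nat.le_induction with
  | base =>
    obtain ⟨p, rfl⟩ : ∃ p, i = p + 1 := ⟨i - 1, by omega⟩
    have hbr : BraidRelation (c (p + 1)) (c (p + 2)) := hc.braidRelation (p + 1) hi (by omega)
    have hcomm := hc.commute_partialProd (m := p) (j := p + 2) le_rfl hm
    rw [Nat.succ_eq_add_one, partialProd_succ, partialProd_succ]
    show partialProd c p * c (p + 1) * c (p + 2) * c (p + 1) =
      c (p + 2) * (partialProd c p * c (p + 1) * c (p + 2))
    calc partialProd c p * c (p + 1) * c (p + 2) * c (p + 1)
        = partialProd c p * (c (p + 1) * c (p + 2) * c (p + 1)) := by simp only [mul_assoc]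
      _ = partialProd c p * c (p + 2) * (c (p + 1) * c (p + 2)) := by
          rw [hbr]; simp only [mul_assoc]
      _ = c (p + 2) * (partialProd c p * c (p + 1) * c (p + 2)) := by
          rw [← hcomm.eq]; simp only [mul_assoc]
  | succ m him ih =>
    have hcomm := hc.commute i (m + 1) hi (by omega) hm
    rw [partialProd_succ, mul_assoc, ← hcomm.eq, ← mul_assoc, ih (by omega), mul_assoc]

theorem conj_partialProd {i : ℕ} (hi : 1 ≤ i) (hin : i ≤ n - 2) :
    partialProd c (n - 1) * c i * (partialProd c (n - 1))⁻¹ = c (i + 1) := by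
  rw [hc.partialProd_mul hi (by omega) le_rfl, mul_inv_cancel_right]

theorem conj_partialProd_partialProd {k : ℕ} (hk : k ≤ n - 2) :
    partialProd c (n - 1) * partialProd c k * (partialProd c (n - 1))⁻¹ =
      ((List.range k).map fun i => c (i + 2)).prod := by
  conv_lhs => rw [← MulAut.conj_apply]; arg 2; unfold partialProd
  rw [map_list_prod, List.map_map]
  congr 1
  refine List.map_congr_left fun i hi => ?_
  exact hc.conj_partialProd (by omega) (by grind)

theorem conj_partialProd_last (hn : 2 ≤ n) :
    partialProd c (n - 1) * c (n - 1) * (partialProd c (n - 1))⁻¹ =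
      (partialProd c (n - 1))⁻¹ * c 1 * partialProd c (n - 1) := by
  set Q := ((List.range (n - 2)).map fun i => c (i + 2)).prod
  have hTP : partialProd c (n - 1) = partialProd c (n - 2) * c (n - 1) := by
    conv_lhs => rw [show n - 1 = n - 2 + 1 by omega]
    rw [partialProd_succ, show n - 2 + 1 = n - 1 by omega]
  have hTQ : partialProd c (n - 1) = c 1 * Q := by
    rw [show n - 1 = n - 2 + 1 by omega, partialProd_succ']
  have hQ : Q = partialProd c (n - 1) * partialProd c (n - 2) * (partialProd c (n - 1))⁻¹ :=
    (hc.conj_partialProd_partialProd le_rfl).symm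
  rw [eq_mul_inv_of_mul_eq hTQ.symm, hQ, eq_inv_mul_of_mul_eq hTP.symm]
  group

theorem commute_affineGen_zero {k : ℕ} (hk : 2 ≤ k) (hkn : k ≤ n - 2) :
    Commute (c k) (affineGen n c 0) := by
  have h := (hc.commute (k - 1) (n - 1) (by omega) (by omega) le_rfl).map
    (MulAut.conj (partialProd c (n - 1)))
  rwa [MulAut.conj_apply, MulAut.conj_apply, hc.conj_partialProd (by omega) (by omega),
    Nat.sub_add_cancel (by omega)] at h

theorem braidRelation_last_affineGen_zero (hn : 3 ≤ n) :
    BraidRelation (c (n - 1)) (affineGen n c 0) := by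
  have h := (hc.braidRelation (n - 2) (by omega) le_rfl).map
    (MulAut.conj (partialProd c (n - 1)))
  rwa [MulAut.conj_apply, MulAut.conj_apply, hc.conj_partialProd (by omega) le_rfl,
    show n - 2 + 1 = n - 1 by omega] at h

theorem braidRelation_one_affineGen_zero (hn : 3 ≤ n) :
    BraidRelation (c 1) (affineGen n c 0) := by
  have h := (hc.braidRelation 1 le_rfl (by omega)).symm.map
    (MulAut.conj (partialProd c (n - 1))⁻¹)
  have hc1 : (partialProd c (n - 1))⁻¹ * (partialProd c (n - 1) * c 1 * (partialProd c (n - 1))⁻¹) *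
      partialProd c (n - 1) = c 1 := by group
  rwa [MulAut.conj_apply, MulAut.conj_apply, inv_inv, ← hc.conj_partialProd le_rfl (by omega),
    ← hc.conj_partialProd_last (by omega), ← affineGen_zero, hc1] at h

theorem braidRelation_affineGen (hn : 3 ≤ n) {a b : ℕ} (hba : b < a) (han : a < n)
    (hd : min (a - b) (n - (a - b)) = 1) :
    BraidRelation (affineGen n c a) (affineGen n c b) := by
  rw [affineGen_of_ne_zero n c (by omega : a ≠ 0)]
  rcases Nat.eq_zero_or_pos b with rfl | hb
  · obtain rfl | rfl : a = 1 ∨ a = n - 1 := by omega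
    exacts [hc.braidRelation_one_affineGen_zero hn, hc.braidRelation_last_affineGen_zero hn]
  · obtain rfl : a = b + 1 := by omega
    rw [affineGen_of_ne_zero n c hb.ne']
    exact (hc.braidRelation b hb (by omega)).symm

theorem commute_affineGen (hn : 3 ≤ n) {a b : ℕ} (hba : b < a) (han : a < n)
    (hd : 2 ≤ min (a - b) (n - (a - b))) :
    Commute (affineGen n c a) (affineGen n c b) := by
  rw [affineGen_of_ne_zero n c (by omega : a ≠ 0)]
  rcases Nat.eq_zero_or_pos b with rfl | hb
  · exact hc.commute_affineGen_zero (by omega) (by omega)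
  · rw [affineGen_of_ne_zero n c hb.ne']
    exact (hc.commute b a hb (by omega) (by omega)).symm

end IsBraidFamily

section ZModIndex

variable {G : Type*} [Group G] {n : ℕ} {c : ℕ → G}

theorem ZMod.natAbs_valMinAbs_sub_of_val_le [NeZero n] {i j : ZMod n} (h : j.val ≤ i.val) :
    (i - j).valMinAbs.natAbs = min (i.val - j.val) (n - (i.val - j.val)) := by
  rw [ZMod.valMinAbs_natAbs_eq_min, ZMod.val_sub h]

theorem IsBraidFamily.braidRelation_affineGen_val (hc : IsBraidFamily n c) (hn : 3 ≤ n)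
    {i j : ZMod n} (hd : (i - j).valMinAbs.natAbs = 1) :
    BraidRelation (affineGen n c i.val) (affineGen n c j.val) := by
  have : NeZero n := ⟨by omega⟩
  rcases le_total j.val i.val with h | h
  · rw [ZMod.natAbs_valMinAbs_sub_of_val_le h] at hd
    exact hc.braidRelation_affineGen hn (by omega) i.val_lt hd
  · rw [← ZMod.natAbs_valMinAbs_neg, neg_sub, ZMod.natAbs_valMinAbs_sub_of_val_le h] at hd
    exact (hc.braidRelation_affineGen hn (by omega) j.val_lt hd).symm

theorem IsBraidFamily.commute_affineGen_val (hc : IsBraidFamily n c) (hn : 3 ≤ n)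
    {i j : ZMod n} (hd : 2 ≤ (i - j).valMinAbs.natAbs) :
    Commute (affineGen n c i.val) (affineGen n c j.val) := by
  have : NeZero n := ⟨by omega⟩
  rcases le_total j.val i.val with h | h
  · rw [ZMod.natAbs_valMinAbs_sub_of_val_le h] at hd
    exact hc.commute_affineGen hn (by omega) i.val_lt hd
  · rw [← ZMod.natAbs_valMinAbs_neg, neg_sub, ZMod.natAbs_valMinAbs_sub_of_val_le h] at hd
    exact (hc.commute_affineGen hn (by omega) j.val_lt hd).symm

end ZModIndex

section Units

variable {M : Type*} [Monoid M]

theorem exists_units_val_eq {ι : Type*} {p : ι → Prop} {f : ι → M} (h : ∀ i, p i → IsUnit (f i)) :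
    ∃ u : ι → Mˣ, ∀ i, p i → (u i : M) = f i := by
  classical
  exact ⟨fun i => if hi : p i then (h i hi).unit else 1, fun i hi => by simp [hi]⟩

variable {c : ℕ → Mˣ} {C : ℕ → M}

theorem IsBraidFamily.of_val_eq {n : ℕ} (hcC : ∀ i, 1 ≤ i → i ≤ n - 1 → (c i : M) = C i)
    (hcomm : ∀ i j, 1 ≤ i → i + 2 ≤ j → j ≤ n - 1 → Commute (C i) (C j))
    (hbraid : ∀ i, 1 ≤ i → i ≤ n - 2 → BraidRelation (C i) (C (i + 1))) :
    IsBraidFamily n c where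
  commute i j hi hij hj := Units.ext <| by
    simpa only [Units.val_mul, hcC i hi (by omega), hcC j (by omega) hj] using (hcomm i j hi hij hj).eq
  braidRelation i hi hin := Units.ext <| by
    simpa only [BraidRelation, Units.val_mul, hcC i hi (by omega), hcC (i + 1) (by omega) (by omega)]
      using hbraid i hi hin

theorem val_partialProd {m : ℕ} (hcC : ∀ i, 1 ≤ i → i ≤ m → (c i : M) = C i) :
    ((partialProd c m : Mˣ) : M) = ((List.range m).map fun i => C (i + 1)).prod := by
  rw [partialProd, ← Units.coeHom_apply, map_list_prod, List.map_map]
  congr 1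
  exact List.map_congr_left fun i hi => hcC (i + 1) (by omega) (by simp at hi; omega)

end Units

section MatrixRange

variable {K ι : Type*} [Field K] [Fintype ι]

theorem Matrix.range_mulVecLin_mul_le (P X : Matrix ι ι K) :
    LinearMap.range (P * X).mulVecLin ≤ LinearMap.range P.mulVecLin := by
  rw [Matrix.mulVecLin_mul]
  exact LinearMap.range_comp_le_range _ _

theorem Matrix.finrank_range_le_of_eq_mul {M P Q X Y : Matrix ι ι K} (hP : M = P * X)
    (hQ : M = Q * Y) :
    Module.finrank K (LinearMap.range M.mulVecLin) ≤
      Module.finrank K ↥(LinearMap.range P.mulVecLin ⊓ LinearMap.range Q.mulVecLin) :=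
  Submodule.finrank_mono <| le_inf (hP ▸ P.range_mulVecLin_mul_le X)
    (hQ ▸ Q.range_mulVecLin_mul_le Y)

theorem Matrix.finrank_range_le_of_braidRelation [DecidableEq ι] {a b : Matrix ι ι K}
    (h : BraidRelation (a + 1) (b + 1)) :
    Module.finrank K (LinearMap.range (a + a ^ 2 + a * b * a).mulVecLin) ≤
      Module.finrank K ↥(LinearMap.range a.mulVecLin ⊓ LinearMap.range b.mulVecLin) := by
  refine finrank_range_le_of_eq_mul (X := 1 + a + b * a) (Y := 1 + b + a * b) (by noncomm_ring) ?_
  rw [← sub_eq_zero, ← sub_eq_zero.2 (h : (a + 1) * (b + 1) * (a + 1) = _)]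
  noncomm_ring

theorem Matrix.finrank_range_mul_le_of_commute [DecidableEq ι] {a b : Matrix ι ι K} (h : Commute (a + 1) (b + 1)) :
    Module.finrank K (LinearMap.range (a * b).mulVecLin) ≤
      Module.finrank K ↥(LinearMap.range a.mulVecLin ⊓ LinearMap.range b.mulVecLin) := by
  have hab : Commute a b := by
    simpa using (h.sub_left (Commute.one_left _)).sub_right (Commute.one_right _)
  exact finrank_range_le_of_eq_mul rfl hab.eq

end MatrixRange

theorem stmt_11_general (n r : ℕ) (hn : 3 ≤ n)
    (C : ℕ → Matrix (Fin r) (Fin r) ℂ)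
    (hinv : ∀ i, 1 ≤ i → i ≤ n - 1 → IsUnit (C i))
    (hcomm : ∀ i j, 1 ≤ i → i ≤ n - 1 → 1 ≤ j → j ≤ n - 1 → i + 2 ≤ j →
      C i * C j = C j * C i)
    (hbraid : ∀ i, 1 ≤ i → i ≤ n - 2 →
      C i * C (i + 1) * C i = C (i + 1) * C i * C (i + 1))
    (T : Matrix (Fin r) (Fin r) ℂ)
    (hT : T = (List.map (fun i => C (i + 1)) (List.range (n - 1))).prod)
    (A : ZMod n → Matrix (Fin r) (Fin r) ℂ)
    (hA : ∀ i : ℕ, 1 ≤ i → i ≤ n - 1 → A (i : ZMod n) = C i - 1)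
    (hA0 : A 0 = T * C (n - 1) * T⁻¹ - 1) :
    ∀ i j : ZMod n, i ≠ j →
      (min ((i - j).val) (n - (i - j).val) = 1 →
        Module.finrank ℂ
            ↥(LinearMap.range (A i).mulVecLin ⊓ LinearMap.range (A j).mulVecLin) ≥
          Module.finrank ℂ
            ↥(LinearMap.range (A i + A i ^ 2 + A i * A j * A i).mulVecLin)) ∧
      (2 ≤ min ((i - j).val) (n - (i - j).val) →
        Module.finrank ℂ
            ↥(LinearMap.range (A i).mulVecLin ⊓ LinearMap.range (A j).mulVecLin) ≥
          Module.finrank ℂ ↥(LinearMap.range (A i * A j).mulVecLin)) := by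
  have : NeZero n := ⟨by omega⟩
  obtain ⟨c, hcC⟩ := exists_units_val_eq (p := fun i => 1 ≤ i ∧ i ≤ n - 1)
    fun i hi => hinv i hi.1 hi.2
  have hfam : IsBraidFamily n c := .of_val_eq (fun i h1 h2 => hcC i ⟨h1, h2⟩)
    (fun i j hi hij hj => hcomm i j hi (by omega) (by omega) hj hij) hbraid
  have hgen (i : ZMod n) : ((affineGen n c i.val : (Matrix (Fin r) (Fin r) ℂ)ˣ) : Matrix _ _ ℂ) =
      A i + 1 := by
    rcases eq_or_ne i 0 with rfl | hi
    · rw [ZMod.val_zero, affineGen_zero, Units.val_mul, Units.val_mul, Matrix.coe_units_inv,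
        val_partialProd fun i h1 h2 => hcC i ⟨h1, h2⟩, ← hT, hcC _ ⟨by omega, le_rfl⟩, hA0,
        sub_add_cancel]
    · have hval := hA i.val (ZMod.val_pos.2 hi) (by have := i.val_lt; omega)
      rw [ZMod.natCast_zmod_val] at hval
      rw [affineGen_of_ne_zero n c ((ZMod.val_ne_zero i).2 hi), hcC _ ⟨ZMod.val_pos.2 hi,
        by have := i.val_lt; omega⟩, hval, sub_add_cancel]
  intro i j _
  simp only [← ZMod.valMinAbs_natAbs_eq_min]
  refine ⟨fun hd => ?_, fun hd => ?_⟩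
  · have h := (hfam.braidRelation_affineGen_val hn hd).map (Units.coeHom _)
    rw [Units.coeHom_apply, Units.coeHom_apply, hgen, hgen] at h
    exact Matrix.finrank_range_le_of_braidRelation h
  · have h := (hfam.commute_affineGen_val hn hd).map (Units.coeHom _)
    rw [Units.coeHom_apply, Units.coeHom_apply, hgen, hgen] at h
    exact Matrix.finrank_range_mul_le_of_commute h

/-- For a representation of `B_n` (`n ≥ 3`) with `A i = C i - 1` (`i ∈ ℤ_n`,
`A 0 = T C_{n-1} T⁻¹ - 1`): for distinct `i j : ZMod n`, if `‖i - j‖ = 1` then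
`f(A_i, A_j) ≥ tf(A_i, A_j) = dim Im (A_i + A_i² + A_i A_j A_i)`, and if
`‖i - j‖ ≥ 2` then `f(A_i, A_j) ≥ dim Im (A_i A_j)`. -/
theorem stmt_11 (n r : ℕ) (hn : 3 ≤ n) (hr : 1 ≤ r)
    (C : ℕ → Matrix (Fin r) (Fin r) ℂ)
    (hinv : ∀ i, 1 ≤ i → i ≤ n - 1 → IsUnit (C i))
    (hcomm : ∀ i j, 1 ≤ i → i ≤ n - 1 → 1 ≤ j → j ≤ n - 1 → i + 2 ≤ j →
      C i * C j = C j * C i)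
    (hbraid : ∀ i, 1 ≤ i → i ≤ n - 2 →
      C i * C (i + 1) * C i = C (i + 1) * C i * C (i + 1))
    (T : Matrix (Fin r) (Fin r) ℂ)
    (hT : T = (List.map (fun i => C (i + 1)) (List.range (n - 1))).prod)
    (A : ZMod n → Matrix (Fin r) (Fin r) ℂ)
    (hA : ∀ i : ℕ, 1 ≤ i → i ≤ n - 1 → A (i : ZMod n) = C i - 1)
    (hA0 : A 0 = T * C (n - 1) * T⁻¹ - 1) :
    ∀ i j : ZMod n, i ≠ j →
      (min ((i - j).val) (n - (i - j).val) = 1 →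
        Module.finrank ℂ
            ↥(LinearMap.range (A i).mulVecLin ⊓ LinearMap.range (A j).mulVecLin) ≥
          Module.finrank ℂ
            ↥(LinearMap.range (A i + A i ^ 2 + A i * A j * A i).mulVecLin)) ∧
      (2 ≤ min ((i - j).val) (n - (i - j).val) →
        Module.finrank ℂ
            ↥(LinearMap.range (A i).mulVecLin ⊓ LinearMap.range (A j).mulVecLin) ≥
          Module.finrank ℂ ↥(LinearMap.range (A i * A j).mulVecLin)) :=
  stmt_11_general n r hn C hinv hcomm hbraid T hT A hA hA0
end

section
/- (Enhanced Lemma about Friends) Let n ≥ 3 and let C_1, …, C_{n−1} ∈ GL_r(ℂ) be a representation of B_n of dimension r; set A_i = C_i − I, T = C_1 ⋯ C_{n−1}, and A_0 = T C_{n−1} T^{−1} − I, indices in ℤ_n. Let i, j, k ∈ ℤ_n be three distinct indices with ||i−j|| = 1 and ||i−k|| ≥ 2. Then dim(Im A_j ∩ Im A_k) ≤ dim Im(A_i + A_i² + A_i A_j A_i) + dim Im(A_i A_k), i.e., f(A_j,A_k) ≤ tf(A_i,A_j) + tf(A_i,A_k). -/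
/-!
Put `D x = A x + 1`. Conjugation by `T = C₁ ⋯ C_{n-1}` sends `C s` to `C (s + 1)` for
`s ≤ n - 2` and `C (n - 1)` to `D 0`, and since `T² C_{n-1} = C₁ T²` it sends `D 0` to `C₁`:
it acts on the cyclic family `D` as `x ↦ x + 1`. So every neighbouring pair `D i, D j`
satisfies the braid relation, which for `X = A i`, `Y = A j` reads `X + X² + XYX = Y + Y² + YXY`.

Then `p = 1 + Y + YX` maps `Im Y` into `Im (X + X² + XYX)`, because `pY = X + X² + XYX`, and
`ker p ∩ ker X = 0`, because `p = 1 + Y` on `ker X`. So on `U = Im Y ∩ Im (A k)` the map `X` is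
injective on `ker p`, with image in `Im (X A k)`, and rank–nullity for `p` on `U` gives the bound.
-/

open Module LinearMap

theorem ZMod.forall_of_add_one {n : ℕ} [NeZero n] {P : ZMod n → Prop} {x₀ : ZMod n}
    (h₀ : P x₀) (h : ∀ x, P x → P (x + 1)) (x : ZMod n) : P x := by
  have key : ∀ s : ℕ, P (x₀ + s) := by
    intro s
    induction s with
    | zero => simpa using h₀
    | succ s ih => simpa [add_assoc] using h _ ih
  simpa using key (x - x₀).val

theorem ZMod.eq_add_one_or_eq_add_one_of_min_val_sub {n : ℕ} {i j : ZMod n}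
    (h : min (i - j).val (n - (i - j).val) = 1) : i = j + 1 ∨ j = i + 1 := by
  rcases n with _ | n
  · simp at h
  have hcast := ZMod.natCast_zmod_val (i - j)
  rcases (show (i - j).val = 1 ∨ (i - j).val = n by have := (i - j).val_lt; omega) with hv | hv
  · left
    rw [hv, Nat.cast_one] at hcast
    linear_combination -hcast
  · right
    rw [hv] at hcast
    have hn : ((n + 1 : ℕ) : ZMod (n + 1)) = 0 := ZMod.natCast_self _
    push_cast at hn
    linear_combination hcast - hn

section Braid

variable {M : Type*} [Monoid M]

theorem IsUnit.of_semiconjBy {t x y : M} (ht : IsUnit t) (h : SemiconjBy t x y)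
    (hx : IsUnit x) : IsUnit y := by
  rw [← Units.isUnit_mul_units y ht.unit, IsUnit.unit_spec, ← h.eq]
  exact ht.mul hx

def BraidRel (x y : M) : Prop := x * y * x = y * x * y

theorem BraidRel.symm {x y : M} (h : BraidRel x y) : BraidRel y x := Eq.symm h

theorem BraidRel.semiconjBy_mul {x y : M} (h : BraidRel x y) : SemiconjBy (x * y) x y := by
  rw [SemiconjBy, h, mul_assoc]

theorem BraidRel.of_semiconjBy {t x y x' y' : M} (ht : IsUnit t) (hx : SemiconjBy t x x')
    (hy : SemiconjBy t y y') (h : BraidRel x y) : BraidRel x' y' := by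
  rw [BraidRel, ← ht.mul_left_inj, ← ((hx.mul_right hy).mul_right hx).eq, h,
    ((hy.mul_right hx).mul_right hy).eq]

theorem braidRel_add_one_iff {R : Type*} [Ring R] {x y : R} :
    BraidRel (x + 1) (y + 1) ↔ x + x ^ 2 + x * y * x = y + y ^ 2 + y * x * y := by
  have h : (x + 1) * (y + 1) * (x + 1) - (y + 1) * (x + 1) * (y + 1) =
      (x + x ^ 2 + x * y * x) - (y + y ^ 2 + y * x * y) := by noncomm_ring
  rw [BraidRel, ← sub_eq_zero, h, sub_eq_zero]

/-- `C 1, …, C N` satisfy the defining relations of the braid group `B_{N+1}`. -/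
structure BraidRelations (N : ℕ) (C : ℕ → M) : Prop where
  commute : ∀ i j, 1 ≤ i → i + 2 ≤ j → j ≤ N → Commute (C i) (C j)
  braidRel : ∀ i, 1 ≤ i → i + 1 ≤ N → BraidRel (C i) (C (i + 1))

def prefixProd (C : ℕ → M) (k : ℕ) : M := (List.map (fun i => C (i + 1)) (List.range k)).prod

@[simp]
theorem prefixProd_zero (C : ℕ → M) : prefixProd C 0 = 1 := rfl

theorem prefixProd_succ (C : ℕ → M) (k : ℕ) :
    prefixProd C (k + 1) = prefixProd C k * C (k + 1) := by
  simp [prefixProd, List.range_succ]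

theorem isUnit_prefixProd {C : ℕ → M} {k : ℕ}
    (hC : ∀ i, 1 ≤ i → i ≤ k → IsUnit (C i)) : IsUnit (prefixProd C k) := by
  induction k with
  | zero => exact isUnit_one
  | succ k ih =>
    rw [prefixProd_succ]
    exact (ih fun i h₁ h₂ => hC i h₁ (by omega)).mul (hC _ (by omega) le_rfl)

variable {N : ℕ} {C : ℕ → M}

theorem BraidRelations.commute_prefixProd (hC : BraidRelations N C) {s t : ℕ} (hst : s + 2 ≤ t)
    (ht : t ≤ N) : Commute (prefixProd C s) (C t) := by
  induction s with
  | zero => exact Commute.one_left _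
  | succ s ih =>
    rw [prefixProd_succ]
    exact (ih (by omega)).mul_left (hC.commute _ _ (by omega) hst ht)

theorem BraidRelations.semiconjBy_prefixProd (hC : BraidRelations N C) {s k : ℕ} (hs : 1 ≤ s)
    (hsk : s < k) (hk : k ≤ N) : SemiconjBy (prefixProd C k) (C s) (C (s + 1)) := by
  induction k, hsk using Nat.le_induction with
  | base =>
    obtain ⟨t, rfl⟩ : ∃ t, s = t + 1 := ⟨s - 1, by omega⟩
    rw [prefixProd_succ, prefixProd_succ, mul_assoc]
    exact (hC.commute_prefixProd le_rfl hk).semiconjBy.mul_left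
      (hC.braidRel _ hs hk).semiconjBy_mul
  | succ k hsk ih =>
    rw [prefixProd_succ]
    exact (ih (by omega)).mul_left (hC.commute _ _ hs (by omega) hk).symm.semiconjBy

theorem BraidRelations.semiconjBy_prefixProd_succ_mul (hC : BraidRelations N C) {k : ℕ}
    (hk : k + 1 ≤ N) : SemiconjBy (prefixProd C (k + 1) * prefixProd C k) (C (k + 1)) (C 1) := by
  induction k with
  | zero =>
    rw [zero_add, prefixProd_succ, prefixProd_zero, one_mul, mul_one]
    exact Commute.refl _
  | succ m ih =>
    have hsplit : prefixProd C (m + 2) * prefixProd C (m + 1) =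
        prefixProd C (m + 1) * prefixProd C m * (C (m + 2) * C (m + 1)) := by
      rw [prefixProd_succ C (m + 1), prefixProd_succ C m, mul_assoc, mul_assoc,
        ← mul_assoc (C (m + 2)), ← (hC.commute_prefixProd le_rfl hk).eq]
      simp only [mul_assoc]
    rw [hsplit]
    exact (ih (by omega)).mul_left (hC.braidRel _ (by omega) hk).symm.semiconjBy_mul

theorem BraidRelations.semiconjBy_prefixProd_mul_self (hC : BraidRelations N C) {k : ℕ}
    (hk₁ : 1 ≤ k) (hk : k ≤ N) :
    SemiconjBy (prefixProd C k * prefixProd C k) (C k) (C 1) := by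
  obtain ⟨k, rfl⟩ : ∃ m, k = m + 1 := ⟨k - 1, by omega⟩
  have := (hC.semiconjBy_prefixProd_succ_mul hk).mul_left (Commute.refl (C (k + 1)))
  rwa [mul_assoc, ← prefixProd_succ] at this

theorem BraidRelations.semiconjBy_zmod {n : ℕ} (hn : 2 ≤ n) (hC : BraidRelations (n - 1) C)
    (hT : IsUnit (prefixProd C (n - 1))) {D : ZMod n → M}
    (hD : ∀ s : ℕ, 1 ≤ s → s ≤ n - 1 → D s = C s)
    (hD₀ : SemiconjBy (prefixProd C (n - 1)) (C (n - 1)) (D 0)) (x : ZMod n) :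
    SemiconjBy (prefixProd C (n - 1)) (D x) (D (x + 1)) := by
  have : NeZero n := ⟨by omega⟩
  set T := prefixProd C (n - 1)
  obtain ⟨s, hs, rfl⟩ : ∃ s < n, x = s :=
    ⟨x.val, x.val_lt, (ZMod.natCast_zmod_val x).symm⟩
  rcases (show s = 0 ∨ s + 1 = n ∨ (1 ≤ s ∧ s + 2 ≤ n) by omega) with
    rfl | hsn | ⟨hs₁, hs₂⟩
  · rw [Nat.cast_zero, zero_add, ← Nat.cast_one, hD 1 le_rfl (by omega), SemiconjBy,
      ← hT.mul_left_inj]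
    calc T * D 0 * T = T * T * C (n - 1) := by rw [mul_assoc, ← hD₀.eq, mul_assoc]
      _ = C 1 * T * T := by
        rw [(hC.semiconjBy_prefixProd_mul_self (by omega) le_rfl).eq, mul_assoc]
  · rw [← Nat.cast_add_one, hsn, ZMod.natCast_self, hD s (by omega) (by omega),
      show s = n - 1 by omega]
    exact hD₀
  · rw [← Nat.cast_add_one, hD s hs₁ (by omega), hD (s + 1) (by omega) (by omega)]
    exact hC.semiconjBy_prefixProd hs₁ (by omega) le_rfl

theorem BraidRelations.braidRel_zmod {n : ℕ} (hn : 3 ≤ n) (hC : BraidRelations (n - 1) C)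
    (hCu : ∀ i, 1 ≤ i → i ≤ n - 1 → IsUnit (C i)) {D : ZMod n → M}
    (hD : ∀ s : ℕ, 1 ≤ s → s ≤ n - 1 → D s = C s)
    (hD₀ : SemiconjBy (prefixProd C (n - 1)) (C (n - 1)) (D 0)) (x : ZMod n) :
    BraidRel (D x) (D (x + 1)) := by
  have : NeZero n := ⟨by omega⟩
  have hT := isUnit_prefixProd hCu
  have hshift := hC.semiconjBy_zmod (by omega) hT hD hD₀
  refine ZMod.forall_of_add_one (P := fun x => BraidRel (D x) (D (x + 1))) (x₀ := 1) ?_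
    (fun x hx => hx.of_semiconjBy hT (hshift x) (hshift (x + 1))) x
  have h₁ := hD 1 le_rfl (by omega)
  have h₂ := hD 2 (by omega) (by omega)
  push_cast at h₁ h₂
  rw [one_add_one_eq_two, h₁, h₂]
  exact hC.braidRel 1 le_rfl (by omega)

theorem BraidRelations.isUnit_zmod {n : ℕ} (hn : 2 ≤ n) (hC : BraidRelations (n - 1) C)
    (hCu : ∀ i, 1 ≤ i → i ≤ n - 1 → IsUnit (C i)) {D : ZMod n → M}
    (hD : ∀ s : ℕ, 1 ≤ s → s ≤ n - 1 → D s = C s)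
    (hD₀ : SemiconjBy (prefixProd C (n - 1)) (C (n - 1)) (D 0)) (x : ZMod n) : IsUnit (D x) := by
  have : NeZero n := ⟨by omega⟩
  have hT := isUnit_prefixProd hCu
  refine ZMod.forall_of_add_one (P := fun x => IsUnit (D x)) (x₀ := 1) ?_
    (fun x hx => hT.of_semiconjBy (hC.semiconjBy_zmod hn hT hD hD₀ x) hx) x
  have h₁ := hD 1 le_rfl (by omega)
  rw [Nat.cast_one] at h₁
  exact h₁ ▸ hCu 1 le_rfl (by omega)

end Braid

section LinearAlgebra

variable {K V W W' : Type*} [Field K] [AddCommGroup V] [Module K V] [FiniteDimensional K V]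
  [AddCommGroup W] [Module K W] [AddCommGroup W'] [Module K W']

theorem LinearMap.finrank_le_finrank_range_add_finrank_range_of_disjoint_ker
    {f : V →ₗ[K] W} {g : V →ₗ[K] W'} (h : Disjoint (ker f) (ker g)) :
    finrank K V ≤ finrank K (range f) + finrank K (range g) :=
  calc finrank K V = finrank K (range f) + finrank K (ker f) :=
        (finrank_range_add_finrank_ker f).symm
    _ = finrank K (range f) + finrank K (range (g.domRestrict (ker f))) := by
        rw [finrank_range_of_inj (injective_domRestrict_iff.mpr h)]
    _ ≤ finrank K (range f) + finrank K (range g) := by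
        gcongr
        exact Submodule.finrank_mono (range_domRestrict_le_range g _)

theorem Module.End.finrank_range_inf_range_le {x y z : End K V} (hy : IsUnit (1 + y))
    (h : x + x ^ 2 + x * y * x = y + y ^ 2 + y * x * y) :
    finrank K ↥(range y ⊓ range z) ≤
      finrank K (range (x + x ^ 2 + x * y * x)) + finrank K (range (x * z)) := by
  set U := range y ⊓ range z
  set p : End K V := 1 + y + y * x with hp_def
  have hp : p * y = x + x ^ 2 + x * y * x := by rw [h, hp_def]; noncomm_ring
  have hdisj : Disjoint (ker (LinearMap.domRestrict p U)) (ker (LinearMap.domRestrict x U)) := by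
    refine Submodule.disjoint_def.mpr fun v hpv hxv => ?_
    have hxv : x v = 0 := hxv
    have hpv : (1 + y) v = 0 := by simpa [p, hxv, add_mul] using hpv
    exact Subtype.ext ((End.isUnit_iff _).mp hy |>.injective (hpv.trans (map_zero _).symm))
  calc finrank K U ≤ finrank K (U.map p) + finrank K (U.map x) := by
        have := finrank_le_finrank_range_add_finrank_range_of_disjoint_ker hdisj
        rwa [range_domRestrict, range_domRestrict] at this
    _ ≤ finrank K (range (p * y)) + finrank K (range (x * z)) := by
        rw [End.mul_eq_comp, End.mul_eq_comp, range_comp, range_comp]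
        gcongr <;> apply Submodule.finrank_mono <;> apply Submodule.map_mono
        exacts [inf_le_left, inf_le_right]
    _ = finrank K (range (x + x ^ 2 + x * y * x)) + finrank K (range (x * z)) := by rw [hp]

theorem Matrix.finrank_range_inf_range_le {ι : Type*} [Fintype ι] [DecidableEq ι]
    {X Y Z : Matrix ι ι K} (hY : IsUnit (1 + Y))
    (h : X + X ^ 2 + X * Y * X = Y + Y ^ 2 + Y * X * Y) :
    finrank K ↥(range Y.mulVecLin ⊓ range Z.mulVecLin) ≤
      finrank K (range (X + X ^ 2 + X * Y * X).mulVecLin) +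
        finrank K (range (X * Z).mulVecLin) := by
  have := End.finrank_range_inf_range_le (x := toLinAlgEquiv' X) (z := toLinAlgEquiv' Z)
    (by simpa using hY.map toLinAlgEquiv') (by simpa using congrArg toLinAlgEquiv' h)
  rwa [← map_pow, ← map_mul, ← map_mul, ← map_mul, ← map_add, ← map_add] at this

end LinearAlgebra

theorem stmt_12_general (n r : ℕ) (hn : 3 ≤ n)
    (C : ℕ → Matrix (Fin r) (Fin r) ℂ)
    (hinv : ∀ i, 1 ≤ i → i ≤ n - 1 → IsUnit (C i))
    (hcomm : ∀ i j, 1 ≤ i → i ≤ n - 1 → 1 ≤ j → j ≤ n - 1 → i + 2 ≤ j →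
      C i * C j = C j * C i)
    (hbraid : ∀ i, 1 ≤ i → i ≤ n - 2 →
      C i * C (i + 1) * C i = C (i + 1) * C i * C (i + 1))
    (T : Matrix (Fin r) (Fin r) ℂ)
    (hT : T = (List.map (fun i => C (i + 1)) (List.range (n - 1))).prod)
    (A : ZMod n → Matrix (Fin r) (Fin r) ℂ)
    (hA : ∀ i : ℕ, 1 ≤ i → i ≤ n - 1 → A (i : ZMod n) = C i - 1)
    (hA0 : A 0 = T * C (n - 1) * T⁻¹ - 1)
    (i j k : ZMod n)
    (hnij : min ((i - j).val) (n - (i - j).val) = 1) :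
    Module.finrank ℂ
        ↥(LinearMap.range (A j).mulVecLin ⊓ LinearMap.range (A k).mulVecLin) ≤
      Module.finrank ℂ
          ↥(LinearMap.range (A i + A i ^ 2 + A i * A j * A i).mulVecLin) +
        Module.finrank ℂ ↥(LinearMap.range (A i * A k).mulVecLin) := by
  have hC : BraidRelations (n - 1) C :=
    ⟨fun i j hi hij hj => hcomm i j hi (by omega) (by omega) hj hij,
      fun i hi hi' => hbraid i hi (by omega)⟩
  replace hT : T = prefixProd C (n - 1) := hT
  have hD : ∀ s : ℕ, 1 ≤ s → s ≤ n - 1 → A s + 1 = C s := fun s h₁ h₂ => by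
    rw [hA s h₁ h₂, sub_add_cancel]
  have hD₀ : SemiconjBy T (C (n - 1)) (A 0 + 1) := by
    rw [hA0, sub_add_cancel, SemiconjBy, mul_assoc _ T⁻¹, Matrix.nonsing_inv_mul _
      ((Matrix.isUnit_iff_isUnit_det T).mp (hT ▸ isUnit_prefixProd hinv)), mul_one]
  subst hT
  have hij : BraidRel (A i + 1) (A j + 1) := by
    have := hC.braidRel_zmod (D := fun x => A x + 1) hn hinv hD hD₀
    rcases ZMod.eq_add_one_or_eq_add_one_of_min_val_sub hnij with rfl | rfl
    exacts [(this j).symm, this i]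
  have hj : IsUnit (1 + A j) := by
    rw [add_comm]
    exact hC.isUnit_zmod (D := fun x => A x + 1) (by omega) hinv hD hD₀ j
  exact Matrix.finrank_range_inf_range_le hj (braidRel_add_one_iff.mp hij)

/-- (Enhanced Lemma about Friends) For a representation of `B_n` (`n ≥ 3`) with
`A i = C i - 1` (`i ∈ ℤ_n`, `A 0 = T C_{n-1} T⁻¹ - 1`): for three distinct indices
`i j k : ZMod n` with `‖i - j‖ = 1` and `‖i - k‖ ≥ 2`,
`f(A_j, A_k) ≤ tf(A_i, A_j) + tf(A_i, A_k)`. -/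
theorem stmt_12 (n r : ℕ) (hn : 3 ≤ n) (hr : 1 ≤ r)
    (C : ℕ → Matrix (Fin r) (Fin r) ℂ)
    (hinv : ∀ i, 1 ≤ i → i ≤ n - 1 → IsUnit (C i))
    (hcomm : ∀ i j, 1 ≤ i → i ≤ n - 1 → 1 ≤ j → j ≤ n - 1 → i + 2 ≤ j →
      C i * C j = C j * C i)
    (hbraid : ∀ i, 1 ≤ i → i ≤ n - 2 →
      C i * C (i + 1) * C i = C (i + 1) * C i * C (i + 1))
    (T : Matrix (Fin r) (Fin r) ℂ)
    (hT : T = (List.map (fun i => C (i + 1)) (List.range (n - 1))).prod)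
    (A : ZMod n → Matrix (Fin r) (Fin r) ℂ)
    (hA : ∀ i : ℕ, 1 ≤ i → i ≤ n - 1 → A (i : ZMod n) = C i - 1)
    (hA0 : A 0 = T * C (n - 1) * T⁻¹ - 1)
    (i j k : ZMod n) (hij : i ≠ j) (hik : i ≠ k) (hjk : j ≠ k)
    (hnij : min ((i - j).val) (n - (i - j).val) = 1)
    (hnik : 2 ≤ min ((i - k).val) (n - (i - k).val)) :
    Module.finrank ℂ
        ↥(LinearMap.range (A j).mulVecLin ⊓ LinearMap.range (A k).mulVecLin) ≤
      Module.finrank ℂ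
          ↥(LinearMap.range (A i + A i ^ 2 + A i * A j * A i).mulVecLin) +
        Module.finrank ℂ ↥(LinearMap.range (A i * A k).mulVecLin) :=
  stmt_12_general n r hn C hinv hcomm hbraid T hT A hA hA0 i j k hnij
end

section
/- Let n ≥ 4 and let C_1, …, C_{n−1} ∈ GL_r(ℂ) be a representation of B_n of dimension r; set A_i = C_i − I for 1 ≤ i ≤ n−1. Then dim Im(A_1 A_3) = dim Im(A_1 A_4) = ⋯ = dim Im(A_1 A_{n−1}); that is, tf(k) = dim Im(A_1 A_{1+k}) takes the same value for all k = 2, 3, …, n−2. -/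
/-!
Write `A i = C i - 1`. For `3 ≤ j ≤ n - 2` the braid relation gives
`C (j+1) * (C j * C (j+1)) = (C j * C (j+1)) * C j`, and `C 1` commutes with `C j` and `C (j+1)`.
Hence the invertible matrix `C j * C (j+1)` conjugates `A 1 * A j` into `A 1 * A (j+1)`, so these
two products have the same rank, and `tf` is constant by induction on `k`.
-/

theorem SemiconjBy.of_braid {M : Type*} [Monoid M] {a b : M} (h : a * b * a = b * a * b) :
    SemiconjBy (a * b) a b := by
  rw [SemiconjBy, h, mul_assoc]

theorem SemiconjBy.sub_one_mul_sub_one_of_braid {R : Type*} [Ring R] {a b c : R}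
    (hab : a * b * a = b * a * b) (hca : Commute c a) (hcb : Commute c b) :
    SemiconjBy (a * b) ((c - 1) * (a - 1)) ((c - 1) * (b - 1)) := by
  have hc : SemiconjBy (a * b) c c := (hca.mul_right hcb).symm
  exact (hc.sub_right (.one_right _)).mul_right
    ((SemiconjBy.of_braid hab).sub_right (.one_right _))

theorem Matrix.rank_eq_of_semiconjBy {m R : Type*} [Fintype m] [DecidableEq m] [CommRing R]
    {U x y : Matrix m m R} (hU : IsUnit U) (h : SemiconjBy U x y) : x.rank = y.rank := by
  have hdet : IsUnit U.det := (Matrix.isUnit_iff_isUnit_det U).mp hU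
  calc x.rank = (U * x).rank := (Matrix.rank_mul_eq_right_of_isUnit_det U x hdet).symm
    _ = (y * U).rank := by rw [h.eq]
    _ = y.rank := Matrix.rank_mul_eq_left_of_isUnit_det U y hdet

theorem Nat.apply_eq_of_apply_succ_eq {α : Type*} {f : ℕ → α} {a b : ℕ}
    (hstep : ∀ k, a ≤ k → k + 1 ≤ b → f (k + 1) = f k) :
    ∀ k, a ≤ k → k ≤ b → f k = f a := by
  intro k hak
  induction k, hak using Nat.le_induction with
  | base => exact fun _ => rfl
  | succ k hak ih => exact fun hkb => (hstep k hak hkb).trans (ih (by omega))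

theorem stmt_13_general (n r : ℕ)
    (C : ℕ → Matrix (Fin r) (Fin r) ℂ)
    (hinv : ∀ i, 1 ≤ i → i ≤ n - 1 → IsUnit (C i))
    (hcomm : ∀ i j, 1 ≤ i → i ≤ n - 1 → 1 ≤ j → j ≤ n - 1 → i + 2 ≤ j →
      C i * C j = C j * C i)
    (hbraid : ∀ i, 1 ≤ i → i ≤ n - 2 →
      C i * C (i + 1) * C i = C (i + 1) * C i * C (i + 1)) :
    ∀ k l, 2 ≤ k → k ≤ n - 2 → 2 ≤ l → l ≤ n - 2 →
      Module.finrank ℂ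
          ↥(LinearMap.range ((C 1 - 1) * (C (1 + k) - 1)).mulVecLin) =
        Module.finrank ℂ
          ↥(LinearMap.range ((C 1 - 1) * (C (1 + l) - 1)).mulVecLin) := by
  let tf : ℕ → ℕ := fun k => ((C 1 - 1) * (C (1 + k) - 1)).rank
  have step : ∀ k, 2 ≤ k → k + 1 ≤ n - 2 → tf (k + 1) = tf k := by
    intro k hk hkn
    have hsemiconj := SemiconjBy.sub_one_mul_sub_one_of_braid
      (hbraid (1 + k) (by omega) (by omega))
      (hcomm 1 (1 + k) le_rfl (by omega) (by omega) (by omega) (by omega))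
      (hcomm 1 (1 + k + 1) le_rfl (by omega) (by omega) (by omega) (by omega))
    have hunit := (hinv (1 + k) (by omega) (by omega)).mul (hinv (1 + k + 1) (by omega) (by omega))
    exact (Matrix.rank_eq_of_semiconjBy hunit hsemiconj).symm
  intro k l hk hkn hl hln
  change tf k = tf l
  rw [Nat.apply_eq_of_apply_succ_eq step k hk hkn, Nat.apply_eq_of_apply_succ_eq step l hl hln]

/-- For a representation of `B_n` (`n ≥ 4`) with `A i = C i - 1`, the quantity
`tf(k) = dim Im (A 1 * A (1+k))` is the same for all `k = 2, …, n-2`. -/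
theorem stmt_13 (n r : ℕ) (hn : 4 ≤ n) (hr : 1 ≤ r)
    (C : ℕ → Matrix (Fin r) (Fin r) ℂ)
    (hinv : ∀ i, 1 ≤ i → i ≤ n - 1 → IsUnit (C i))
    (hcomm : ∀ i j, 1 ≤ i → i ≤ n - 1 → 1 ≤ j → j ≤ n - 1 → i + 2 ≤ j →
      C i * C j = C j * C i)
    (hbraid : ∀ i, 1 ≤ i → i ≤ n - 2 →
      C i * C (i + 1) * C i = C (i + 1) * C i * C (i + 1)) :
    ∀ k l, 2 ≤ k → k ≤ n - 2 → 2 ≤ l → l ≤ n - 2 →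
      Module.finrank ℂ
          ↥(LinearMap.range ((C 1 - 1) * (C (1 + k) - 1)).mulVecLin) =
        Module.finrank ℂ
          ↥(LinearMap.range ((C 1 - 1) * (C (1 + l) - 1)).mulVecLin) :=
  stmt_13_general n r C hinv hcomm hbraid
end

section
/- Let n ≥ 5 and let C_1, …, C_{n−1} ∈ GL_r(ℂ) be an irreducible representation of B_n of dimension r ≥ n+1; set A_i = C_i − I, T = C_1 ⋯ C_{n−1}, A_0 = T C_{n−1} T^{−1} − I, indices in ℤ_n. Suppose the corank k = rank(A_1) satisfies 3 ≤ k ≤ r−1. Then dim(Im A_1 ∩ Im A_{1+j}) < k for every j = 1, 2, …, n−1 (indices modulo n). -/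
/-!
The Coxeter element `T = C₁ ⋯ C_{n-1}` conjugates `C_i` to `C_{i+1}` for `i ≤ n - 2`, and `T²`
conjugates `C_{n-1}` to `C₁`; hence `T` conjugates `A_c` to `A_{c+1}` for every `c ∈ ℤ_n`. So all
the `A_c` have rank `k`, and if `Im A₁ ∩ Im A_{1+j}` had dimension `k`, then `Im A₁ = Im A_{1+j}`
and, transporting by powers of `T`, `c ↦ Im A_c` would be `j`-periodic. Given a generator `C_m`,
since `n ≥ 5` one of `1, 1 + j, 1 + 2j` is not a neighbour `m ± 1` of `m` in `ℤ_n`; `C_m` commutes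
with the corresponding `A_c`, hence preserves `Im A_c = Im A₁`. Then `Im A₁` is a proper nonzero
invariant subspace, contradicting irreducibility.
-/

namespace BraidRep

section Monoid

variable {M : Type*} [Monoid M]

theorem semiconjBy_list_prod_map {ι : Type*} {a : M} {f g : ι → M} {l : List ι}
    (h : ∀ i ∈ l, SemiconjBy a (f i) (g i)) :
    SemiconjBy a (l.map f).prod (l.map g).prod := by
  induction l with
  | nil => exact SemiconjBy.one_right a
  | cons i l ih =>
    rw [List.forall_mem_cons] at h
    simpa only [List.map_cons, List.prod_cons] using h.1.mul_right (ih h.2)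

theorem commute_of_semiconjBy {a x y x' y' : M} (ha : IsUnit a) (hx : SemiconjBy a x x')
    (hy : SemiconjBy a y y') (h : Commute x y) : Commute x' y' := by
  refine ha.mul_left_inj.mp ?_
  calc x' * y' * a = a * (x * y) := by rw [mul_assoc, ← hy.eq, ← mul_assoc, ← hx.eq, mul_assoc]
    _ = a * (y * x) := by rw [h.eq]
    _ = y' * x' * a := by rw [← mul_assoc, hy.eq, mul_assoc, hx.eq, mul_assoc]

def rangeProd (C : ℕ → M) (s m : ℕ) : M := ((List.range' s m).map C).prod

theorem rangeProd_add (C : ℕ → M) (s a b : ℕ) :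
    rangeProd C s (a + b) = rangeProd C s a * rangeProd C (s + a) b := by
  simp [rangeProd, ← List.range'_append_1]

theorem rangeProd_succ (C : ℕ → M) (s m : ℕ) :
    rangeProd C s (m + 1) = rangeProd C s m * C (s + m) := by
  simp [rangeProd, List.range'_1_concat]

theorem rangeProd_succ' (C : ℕ → M) (s m : ℕ) :
    rangeProd C s (m + 1) = C s * rangeProd C (s + 1) m := by
  simp [rangeProd, List.range'_succ]

theorem commute_rangeProd {C : ℕ → M} {x : M} {s m : ℕ}
    (h : ∀ i, s ≤ i → i < s + m → Commute x (C i)) : Commute x (rangeProd C s m) :=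
  Commute.list_prod_right _ _ fun y hy => by
    obtain ⟨i, hi, rfl⟩ := List.mem_map.mp hy
    rw [List.mem_range'_1] at hi
    exact h i hi.1 hi.2

theorem semiconjBy_rangeProd {C : ℕ → M} {a : M} {s m : ℕ}
    (h : ∀ i, s ≤ i → i < s + m → SemiconjBy a (C i) (C (i + 1))) :
    SemiconjBy a (rangeProd C s m) (rangeProd C (s + 1) m) := by
  rw [rangeProd, rangeProd, List.range'_succ_left, List.map_map]
  exact semiconjBy_list_prod_map fun i hi => by
    rw [List.mem_range'_1] at hi
    exact h i hi.1 hi.2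

theorem isUnit_rangeProd {C : ℕ → M} {s m : ℕ} (h : ∀ i, s ≤ i → i < s + m → IsUnit (C i)) :
    IsUnit (rangeProd C s m) :=
  list_prod_mem (S := IsUnit.submonoid M) fun y hy => by
    obtain ⟨i, hi, rfl⟩ := List.mem_map.mp hy
    rw [List.mem_range'_1] at hi
    exact h i hi.1 hi.2

section Braid

variable {n : ℕ} {C : ℕ → M}
  (hcomm : ∀ i j, 1 ≤ i → i ≤ n - 1 → 1 ≤ j → j ≤ n - 1 → i + 2 ≤ j →
      C i * C j = C j * C i)
  (hbraid : ∀ i, 1 ≤ i → i ≤ n - 2 →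
      C i * C (i + 1) * C i = C (i + 1) * C i * C (i + 1))
include hcomm hbraid

theorem rangeProd_semiconjBy_succ {i : ℕ} (hi1 : 1 ≤ i) (hi2 : i + 2 ≤ n) :
    SemiconjBy (rangeProd C 1 (n - 1)) (C i) (C (i + 1)) := by
  obtain ⟨a, b, rfl, rfl⟩ : ∃ a b, i = a + 1 ∧ n = a + b + 3 := ⟨i - 1, n - i - 2, by omega, by omega⟩
  set P := rangeProd C 1 a
  set Q := rangeProd C (a + 3) b
  have hsplit : rangeProd C 1 (a + b + 3 - 1) = P * C (a + 1) * C (a + 2) * Q := by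
    rw [show a + b + 3 - 1 = a + (b + 1 + 1) by omega, rangeProd_add, rangeProd_succ',
      rangeProd_succ']
    simp only [mul_assoc, Nat.add_comm 1 a]
    rfl
  have hQ : Commute (C (a + 1)) Q := commute_rangeProd fun j hj _ =>
    hcomm (a + 1) j (by omega) (by omega) (by omega) (by omega) (by omega)
  have hP : Commute (C (a + 2)) P := commute_rangeProd fun j _ hj =>
    (hcomm j (a + 2) (by omega) (by omega) (by omega) (by omega) (by omega)).symm
  have hb : C (a + 1) * C (a + 2) * C (a + 1) = C (a + 2) * C (a + 1) * C (a + 2) :=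
    hbraid (a + 1) (by omega) (by omega)
  unfold SemiconjBy
  calc rangeProd C 1 (a + b + 3 - 1) * C (a + 1)
      = P * (C (a + 1) * C (a + 2) * C (a + 1)) * Q := by
        simp only [hsplit, mul_assoc, hQ.symm.eq]
    _ = C (a + 2) * (P * C (a + 1) * C (a + 2) * Q) := by
        simp only [hb, ← mul_assoc, hP.symm.eq]
    _ = C (a + 1 + 1) * rangeProd C 1 (a + b + 3 - 1) := by rw [hsplit]

theorem rangeProd_sq_semiconjBy (hn : 2 ≤ n) :
    SemiconjBy (rangeProd C 1 (n - 1) * rangeProd C 1 (n - 1)) (C (n - 1)) (C 1) := by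
  have hT : rangeProd C 1 (n - 1) = C 1 * rangeProd C 2 (n - 2) := by
    rw [show n - 1 = n - 2 + 1 by omega, rangeProd_succ']
  have hT' : rangeProd C 1 (n - 1) = rangeProd C 1 (n - 2) * C (n - 1) := by
    rw [show n - 1 = n - 2 + 1 by omega, rangeProd_succ, show 1 + (n - 2) = n - 2 + 1 by omega]
  have hshift : rangeProd C 1 (n - 1) * rangeProd C 1 (n - 2)
      = rangeProd C 2 (n - 2) * rangeProd C 1 (n - 1) :=
    semiconjBy_rangeProd fun i hi1 hi2 =>
      rangeProd_semiconjBy_succ hcomm hbraid (by omega) (by omega)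
  set T := rangeProd C 1 (n - 1)
  unfold SemiconjBy
  calc T * T * C (n - 1) = C 1 * (rangeProd C 2 (n - 2) * T) * C (n - 1) := by
        nth_rewrite 1 [hT]; simp only [mul_assoc]
    _ = C 1 * (T * T) := by
        rw [← hshift, mul_assoc (C 1), mul_assoc T, ← hT']

end Braid

end Monoid

theorem natCast_ne_zero_of_lt {n m : ℕ} (h0 : 0 < m) (h : m < n) : (m : ZMod n) ≠ 0 := by
  rw [Ne, ZMod.natCast_eq_zero_iff]
  exact fun hd => absurd (Nat.le_of_dvd h0 hd) (by omega)

theorem natCast_pred_add_one {n : ℕ} (hn : 1 ≤ n) : ((n - 1 : ℕ) : ZMod n) + 1 = 0 := by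
  rw [← Nat.cast_add_one, Nat.sub_add_cancel hn, ZMod.natCast_self]

theorem zmod_of_forall_imp_add_one {n : ℕ} [NeZero n] {p : ZMod n → Prop}
    (h : ∀ c, p c → p (c + 1)) {a : ZMod n} (ha : p a) (b : ZMod n) : p b := by
  have key : ∀ t : ℕ, p (a + t) := fun t => by
    induction t with
    | zero => simpa using ha
    | succ t ih => simpa [add_assoc] using h _ ih
  simpa using key (b - a).val

theorem exists_ne_sub_one_ne_add_one {R : Type*} [CommRing R] (h4 : (4 : R) ≠ 0) {j : R}
    (hj : j ≠ 0) (a b : R) : ∃ t : ℕ, a + t * j ≠ b - 1 ∧ a + t * j ≠ b + 1 := by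
  by_contra! h
  have h0 := h 0
  have h1 := h 1
  have h2 := h 2
  push_cast at h0 h1 h2
  rw [← or_iff_not_imp_left] at h0 h1 h2
  -- consecutive terms differ by `j ≠ 0`, so they alternate: `j = ±2` and `2 * j = 0`
  rcases h0 with h0 | h0 <;> rcases h1 with h1 | h1 <;> rcases h2 with h2 | h2
  all_goals first
    | exact hj (by linear_combination h1 - h0)
    | exact hj (by linear_combination h2 - h1)
    | exact h4 (by linear_combination 2 * h1 - h0 - h2)
    | exact h4 (by linear_combination h0 + h2 - 2 * h1)

section Matrix

variable {ι R : Type*} [Fintype ι] [CommRing R]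

open LinearMap Matrix

theorem mulVec_mem_range_of_commute {X A : Matrix ι ι R} (h : Commute X A) {v : ι → R}
    (hv : v ∈ range A.mulVecLin) : X *ᵥ v ∈ range A.mulVecLin := by
  obtain ⟨w, rfl⟩ := hv
  exact ⟨X *ᵥ w, by simp only [Matrix.mulVecLin_apply, Matrix.mulVec_mulVec, h.eq]⟩

variable [DecidableEq ι]

theorem range_mulVecLin_eq_map {T A B : Matrix ι ι R} (hT : IsUnit T) (h : SemiconjBy T A B) :
    range B.mulVecLin = (range A.mulVecLin).map T.mulVecLin := by
  rw [← range_comp, ← Matrix.mulVecLin_mul, h.eq, Matrix.mulVecLin_mul,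
    range_comp_of_range_eq_top]
  exact range_eq_top.mpr (Matrix.mulVec_surjective_iff_isUnit.mpr hT)

theorem rank_eq_of_semiconjBy {T A B : Matrix ι ι R} (hT : IsUnit T) (h : SemiconjBy T A B) :
    A.rank = B.rank := by
  have hdet := (isUnit_iff_isUnit_det T).mp hT
  rw [← rank_mul_eq_right_of_isUnit_det T A hdet, h.eq, rank_mul_eq_left_of_isUnit_det T B hdet]

variable {n : ℕ} {C : ℕ → Matrix ι ι R} {T : Matrix ι ι R} {A : ZMod n → Matrix ι ι R}

theorem semiconjBy_add_one (hn : 2 ≤ n) (hT : IsUnit T)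
    (hTC : ∀ i, 1 ≤ i → i + 2 ≤ n → SemiconjBy T (C i) (C (i + 1)))
    (hTT : SemiconjBy (T * T) (C (n - 1)) (C 1))
    (hA : ∀ i : ℕ, 1 ≤ i → i ≤ n - 1 → A i = C i - 1) (hA0 : A 0 = T * C (n - 1) * T⁻¹ - 1)
    (c : ZMod n) : SemiconjBy T (A c) (A (c + 1)) := by
  have : NeZero n := ⟨by omega⟩
  have hdet := (Matrix.isUnit_iff_isUnit_det T).mp hT
  obtain ⟨i, hi, rfl⟩ : ∃ i < n, (i : ZMod n) = c := ⟨c.val, c.val_lt, c.natCast_zmod_val⟩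
  obtain rfl | ⟨hi1, hi2⟩ | rfl : i = 0 ∨ (1 ≤ i ∧ i + 2 ≤ n) ∨ i = n - 1 := by omega
  · have hA1 := hA 1 le_rfl (by omega)
    rw [Nat.cast_one] at hA1
    rw [Nat.cast_zero, zero_add, hA0, hA1]
    refine SemiconjBy.sub_right ?_ (SemiconjBy.one_right T)
    rw [SemiconjBy, ← mul_assoc, ← mul_assoc, hTT.eq, mul_assoc, mul_assoc,
      Matrix.mul_nonsing_inv T hdet, mul_one]
  · rw [hA i hi1 (by omega), ← Nat.cast_succ, hA (i + 1) (by omega) (by omega)]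
    exact (hTC i hi1 hi2).sub_right (SemiconjBy.one_right T)
  · rw [natCast_pred_add_one (by omega), hA (n - 1) (by omega) le_rfl, hA0]
    refine SemiconjBy.sub_right ?_ (SemiconjBy.one_right T)
    rw [SemiconjBy, mul_assoc _ T⁻¹, Matrix.nonsing_inv_mul T hdet, mul_one]

theorem commute_of_not_adjacent (hT : IsUnit T)
    (hcomm : ∀ i j, 1 ≤ i → i ≤ n - 1 → 1 ≤ j → j ≤ n - 1 → i + 2 ≤ j →
      C i * C j = C j * C i)
    (hTC : ∀ i, 1 ≤ i → i + 2 ≤ n → SemiconjBy T (C i) (C (i + 1)))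
    (hTA : ∀ c, SemiconjBy T (A c) (A (c + 1)))
    (hA : ∀ i : ℕ, 1 ≤ i → i ≤ n - 1 → A i = C i - 1)
    {m : ℕ} (hm1 : 1 ≤ m) (hm2 : m ≤ n - 1) {c : ZMod n}
    (hc1 : c ≠ m - 1) (hc2 : c ≠ m + 1) : Commute (C m) (A c) := by
  have : NeZero n := ⟨by omega⟩
  obtain ⟨i, hi, rfl⟩ : ∃ i < n, (i : ZMod n) = c := ⟨c.val, c.val_lt, c.natCast_zmod_val⟩
  rcases Nat.eq_zero_or_pos i with rfl | hi1
  · rw [Nat.cast_zero] at hc1 hc2 ⊢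
    have hm1' : m ≠ 1 := by rintro rfl; simp at hc1
    have hm2' : m ≠ n - 1 := by
      rintro rfl; exact hc2 (natCast_pred_add_one (n := n) (by omega)).symm
    have h : Commute (C (m - 1)) (A (n - 1 : ℕ)) := by
      rw [hA (n - 1) (by omega) le_rfl]
      exact Commute.sub_right (hcomm (m - 1) (n - 1) (by omega) (by omega) (by omega) le_rfl
        (by omega)) (Commute.one_right _)
    have h' := commute_of_semiconjBy hT (hTC (m - 1) (by omega) (by omega)) (hTA _) h
    rwa [Nat.sub_add_cancel hm1, natCast_pred_add_one (by omega)] at h'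
  · rw [hA i hi1 (by omega)]
    refine Commute.sub_right ?_ (Commute.one_right _)
    obtain rfl | hlt | hgt : i = m ∨ i + 2 ≤ m ∨ m + 2 ≤ i := by
      have : i ≠ m - 1 := by rintro rfl; exact hc1 (by rw [Nat.cast_sub hm1, Nat.cast_one])
      have : i ≠ m + 1 := by rintro rfl; exact hc2 (by rw [Nat.cast_succ])
      omega
    · exact Commute.refl _
    · exact (hcomm i m hi1 (by omega) hm1 hm2 hlt).symm
    · exact hcomm m i hm1 hm2 hi1 (by omega) hgt

end Matrix

open LinearMap Module in
theorem periodic_range_of_finrank_inf_eq {ι K : Type*} [Fintype ι] [DecidableEq ι] [Field K]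
    {n : ℕ} [NeZero n] {T : Matrix ι ι K} {A : ZMod n → Matrix ι ι K} (hT : IsUnit T)
    (hTA : ∀ c, SemiconjBy T (A c) (A (c + 1))) {a d : ZMod n}
    (h : finrank K ↥(range (A a).mulVecLin ⊓ range (A (a + d)).mulVecLin) = (A a).rank) :
    Function.Periodic (fun c => range (A c).mulVecLin) d := by
  have hrank : (A (a + d)).rank = (A a).rank :=
    zmod_of_forall_imp_add_one (p := fun c => (A c).rank = (A a).rank)
      (fun c hc => (rank_eq_of_semiconjBy hT (hTA c)).symm.trans hc) rfl _
  have had : range (A (a + d)).mulVecLin = range (A a).mulVecLin :=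
    (Submodule.eq_of_le_of_finrank_eq inf_le_right (h.trans hrank.symm)).symm.trans
      (Submodule.eq_of_le_of_finrank_eq inf_le_left h)
  exact zmod_of_forall_imp_add_one (p := fun c => range (A (c + d)).mulVecLin = range (A c).mulVecLin)
    (fun c hc => by
      rw [add_right_comm, range_mulVecLin_eq_map hT (hTA _), range_mulVecLin_eq_map hT (hTA c), hc])
    had

end BraidRep

open BraidRep

theorem stmt_15_general (n r : ℕ) (hn : 5 ≤ n)
    (C : ℕ → Matrix (Fin r) (Fin r) ℂ)
    (hinv : ∀ i, 1 ≤ i → i ≤ n - 1 → IsUnit (C i))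
    (hcomm : ∀ i j, 1 ≤ i → i ≤ n - 1 → 1 ≤ j → j ≤ n - 1 → i + 2 ≤ j →
      C i * C j = C j * C i)
    (hbraid : ∀ i, 1 ≤ i → i ≤ n - 2 →
      C i * C (i + 1) * C i = C (i + 1) * C i * C (i + 1))
    (hirr : ∀ p : Submodule ℂ (Fin r → ℂ),
      (∀ i, 1 ≤ i → i ≤ n - 1 → ∀ v ∈ p, (C i).mulVec v ∈ p) → p = ⊥ ∨ p = ⊤)
    (T : Matrix (Fin r) (Fin r) ℂ)
    (hT : T = (List.map (fun i => C (i + 1)) (List.range (n - 1))).prod)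
    (A : ZMod n → Matrix (Fin r) (Fin r) ℂ)
    (hA : ∀ i : ℕ, 1 ≤ i → i ≤ n - 1 → A (i : ZMod n) = C i - 1)
    (hA0 : A 0 = T * C (n - 1) * T⁻¹ - 1)
    (k : ℕ) (hk : (A 1).rank = k) (hk3 : 3 ≤ k) (hkr : k ≤ r - 1) :
    ∀ j : ℕ, 1 ≤ j → j ≤ n - 1 →
      Module.finrank ℂ
          ↥(LinearMap.range (A 1).mulVecLin ⊓
            LinearMap.range (A ((1 + j : ℕ) : ZMod n)).mulVecLin) < k := by
  have : NeZero n := ⟨by omega⟩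
  intro j hj1 hj2
  have hTprod : T = rangeProd C 1 (n - 1) := by
    simp only [hT, rangeProd, List.range'_eq_map_range, List.map_map, Function.comp_def,
      Nat.add_comm 1]
  have hTunit : IsUnit T := hTprod ▸ isUnit_rangeProd fun i h1 h2 => hinv i h1 (by omega)
  have hTC : ∀ i, 1 ≤ i → i + 2 ≤ n → SemiconjBy T (C i) (C (i + 1)) := fun i h1 h2 =>
    hTprod ▸ rangeProd_semiconjBy_succ hcomm hbraid h1 h2
  have hTA : ∀ c, SemiconjBy T (A c) (A (c + 1)) := semiconjBy_add_one (by omega) hTunit hTC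
    (hTprod ▸ rangeProd_sq_semiconjBy hcomm hbraid (by omega)) hA hA0
  refine lt_of_le_of_ne ((Submodule.finrank_mono inf_le_left).trans_eq hk) fun heq => ?_
  rw [Nat.cast_add, Nat.cast_one] at heq
  have hper := periodic_range_of_finrank_inf_eq hTunit hTA (heq.trans hk.symm)
  have hWinv : ∀ m, 1 ≤ m → m ≤ n - 1 →
      ∀ v ∈ LinearMap.range (A 1).mulVecLin, (C m).mulVec v ∈ LinearMap.range (A 1).mulVecLin := by
    intro m hm1 hm2
    obtain ⟨t, ht1, ht2⟩ := exists_ne_sub_one_ne_add_one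
      (by exact_mod_cast natCast_ne_zero_of_lt (n := n) (m := 4) (by omega) (by omega))
      (natCast_ne_zero_of_lt hj1 (by omega)) (1 : ZMod n) m
    have hW : LinearMap.range (A (1 + t * j)).mulVecLin = LinearMap.range (A 1).mulVecLin :=
      hper.nat_mul t 1
    rw [← hW]
    exact fun v => mulVec_mem_range_of_commute
      (commute_of_not_adjacent hTunit hcomm hTC hTA hA hm1 hm2 ht1 ht2)
  rcases hirr _ hWinv with h | h
  · rw [Matrix.rank, h, finrank_bot] at hk
    omega
  · rw [Matrix.rank, h, finrank_top, Module.finrank_fin_fun] at hk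
    omega

/-- For `n ≥ 5` and an irreducible representation of `B_n` of dimension `r ≥ n+1`,
with `A i = C i - 1` (`i ∈ ℤ_n`, `A 0 = T C_{n-1} T⁻¹ - 1`): if the corank
`k = rank (A 1)` satisfies `3 ≤ k ≤ r - 1`, then
`dim (Im A_1 ∩ Im A_{1+j}) < k` for all `j = 1, …, n-1`. -/
theorem stmt_15 (n r : ℕ) (hn : 5 ≤ n) (hr : n + 1 ≤ r)
    (C : ℕ → Matrix (Fin r) (Fin r) ℂ)
    (hinv : ∀ i, 1 ≤ i → i ≤ n - 1 → IsUnit (C i))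
    (hcomm : ∀ i j, 1 ≤ i → i ≤ n - 1 → 1 ≤ j → j ≤ n - 1 → i + 2 ≤ j →
      C i * C j = C j * C i)
    (hbraid : ∀ i, 1 ≤ i → i ≤ n - 2 →
      C i * C (i + 1) * C i = C (i + 1) * C i * C (i + 1))
    (hirr : ∀ p : Submodule ℂ (Fin r → ℂ),
      (∀ i, 1 ≤ i → i ≤ n - 1 → ∀ v ∈ p, (C i).mulVec v ∈ p) → p = ⊥ ∨ p = ⊤)
    (T : Matrix (Fin r) (Fin r) ℂ)
    (hT : T = (List.map (fun i => C (i + 1)) (List.range (n - 1))).prod)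
    (A : ZMod n → Matrix (Fin r) (Fin r) ℂ)
    (hA : ∀ i : ℕ, 1 ≤ i → i ≤ n - 1 → A (i : ZMod n) = C i - 1)
    (hA0 : A 0 = T * C (n - 1) * T⁻¹ - 1)
    (k : ℕ) (hk : (A 1).rank = k) (hk3 : 3 ≤ k) (hkr : k ≤ r - 1) :
    ∀ j : ℕ, 1 ≤ j → j ≤ n - 1 →
      Module.finrank ℂ
          ↥(LinearMap.range (A 1).mulVecLin ⊓
            LinearMap.range (A ((1 + j : ℕ) : ZMod n)).mulVecLin) < k :=
  stmt_15_general n r hn C hinv hcomm hbraid hirr T hT A hA hA0 k hk hk3 hkr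
end
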